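/- arXiv:1209.5514 — 9 statements merged into one kernel-verified Lean document; each statement's English description precedes it below -/
import Mathlib

section
/- Let Γ be a connected cubic graph and let C be a cracker in Γ. Then each of the two connected components of the graph obtained from Γ by deleting the edges of C contains a cycle (i.e., every cracker of a connected cubic graph is a cyclic edge cut). -/
open SimpleGraph

/-- A graph is cubic if every vertex has exactly three neighbours. -/
def IsCubic {V : Type*} (G : SimpleGraph V) : Prop :=
  ∀ v : V, (G.neighborSet v).ncard = 3

/-- A cracker of `G`: a nonempty set of edges of `G`, no two of which share a
vertex, whose deletion disconnects `G`, while no proper subset disconnects `G`. -/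
def IsCracker {V : Type*} (G : SimpleGraph V) (C : Set (Sym2 V)) : Prop :=
  C.Nonempty ∧ C ⊆ G.edgeSet ∧
    C.Pairwise (fun e f => ∀ v : V, ¬(v ∈ e ∧ v ∈ f)) ∧
    ¬(G.deleteEdges C).Connected ∧
    ∀ C' : Set (Sym2 V), C' ⊂ C → (G.deleteEdges C').Connected

/-- A `k`-cracker is a cracker consisting of `k` edges. -/
def IsKCracker {V : Type*} (G : SimpleGraph V) (C : Set (Sym2 V)) (k : ℕ) : Prop :=
  IsCracker G C ∧ C.ncard = k

section Aux

variable {V : Type*}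

/-- In a path starting at `w`, at most one edge contains `w`. -/
lemma edges_start_subsingleton {H : SimpleGraph V} {w x : V} (q : H.Walk w x)
    (hq : q.IsPath) : {u : V | s(w, u) ∈ q.edges}.Subsingleton := by
  cases q with
  | nil => intro a ha; simp at ha
  | @cons _ y _ h q' =>
    intro a ha b hb
    simp only [Set.mem_setOf_eq, SimpleGraph.Walk.edges_cons, List.mem_cons] at ha hb
    have hw : w ∉ q'.support := by
      have := hq.support_nodup
      simp only [SimpleGraph.Walk.support_cons, List.nodup_cons] at this
      exact this.1
    have key : ∀ c : V, s(w, c) = s(w, y) ∨ s(w, c) ∈ q'.edges → c = y := by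
      intro c hc
      rcases hc with hc | hc
      · exact Sym2.congr_right.mp hc
      · exact absurd (q'.fst_mem_support_of_mem_edges hc) hw
    rw [key a ha, key b hb]

/-- Every vertex of a finite graph of minimum degree `≥ 2` lies in a component
containing a cycle. -/
lemma exists_cycle_of_two_le [Fintype V] {H : SimpleGraph V}
    (h2 : ∀ v, 2 ≤ (H.neighborSet v).ncard) (v : V) :
    ∃ w, H.Reachable v w ∧ ∃ c : H.Walk w w, c.IsCycle := by
  classical
  by_contra hno
  push_neg at hno
  have key : ∀ n, ∃ w, ∃ p : H.Walk v w, p.IsPath ∧ p.length = n := by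
    intro n
    induction n with
    | zero => exact ⟨v, SimpleGraph.Walk.nil, SimpleGraph.Walk.IsPath.nil, rfl⟩
    | succ n ih =>
      obtain ⟨w, p, hp, hl⟩ := ih
      -- find a neighbour u of w with s(w,u) ∉ p.edges
      have hsub : {u : V | s(w, u) ∈ p.reverse.edges}.Subsingleton :=
        edges_start_subsingleton p.reverse hp.reverse
      have hex : ∃ u, H.Adj w u ∧ s(w, u) ∉ p.edges := by
        by_contra hcon
        push_neg at hcon
        have hsubset : H.neighborSet w ⊆ {u : V | s(w, u) ∈ p.reverse.edges} := by
          intro u hu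
          simpa using hcon u hu
        have := Set.ncard_le_ncard hsubset (Set.toFinite _)
        have h1 : {u : V | s(w, u) ∈ p.reverse.edges}.ncard ≤ 1 :=
          (Set.ncard_le_one_iff (Set.toFinite _)).mpr fun ha hb => hsub ha hb
        have := h2 w
        omega
      obtain ⟨u, hadj, hne⟩ := hex
      by_cases hu : u ∈ p.support
      · -- build a cycle, contradiction
        exfalso
        have hq : (p.dropUntil u hu).IsPath := hp.dropUntil hu
        have hqe : s(w, u) ∉ (p.dropUntil u hu).edges := fun h =>
          hne (SimpleGraph.Walk.edges_dropUntil_subset p hu h)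
        have hc : (SimpleGraph.Walk.cons hadj (p.dropUntil u hu)).IsCycle := by
          rw [SimpleGraph.Walk.cons_isCycle_iff]
          exact ⟨hq, hqe⟩
        exact hno w p.reachable _ hc
      · refine ⟨u, (SimpleGraph.Walk.cons hadj.symm p.reverse).reverse, ?_, ?_⟩
        · exact (hp.reverse.cons (by simpa using hu)).reverse
        · simp [hl]
  obtain ⟨w, p, hp, hl⟩ := key (Fintype.card V)
  have := hp.length_lt
  omega

lemma reach_or_aux {H' H : SimpleGraph V} {a b : V}
    (hHH' : ∀ x y : V, H'.Adj x y → H.Adj x y ∨ s(x, y) = s(a, b)) :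
    ∀ {v : V} (_ : H'.Walk v a), H.Reachable v a ∨ H.Reachable v b := by
  intro v p
  induction p with
  | nil => exact Or.inl (Reachable.refl _)
  | @cons x y _ h p ih =>
    rcases hHH' x y h with hadj | heq
    · rcases ih hHH' with h1 | h1
      · exact Or.inl (hadj.reachable.trans h1)
      · exact Or.inr (hadj.reachable.trans h1)
    · rcases Sym2.eq_iff.mp heq with ⟨rfl, rfl⟩ | ⟨rfl, rfl⟩
      · exact Or.inl (Reachable.refl _)
      · exact Or.inr (Reachable.refl _)

end Aux

/-- deleting a cracker from a connected cubic graph leaves exactly two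
connected components, each of which contains a cycle. -/
theorem cracker_components_contain_cycles {V : Type*} [Fintype V] (G : SimpleGraph V)
    (hG : G.Connected) (hcub : IsCubic G) (C : Set (Sym2 V)) (hC : IsCracker G C) :
    Nat.card (G.deleteEdges C).ConnectedComponent = 2 ∧
      ∀ K : (G.deleteEdges C).ConnectedComponent,
        ∃ v : V, (G.deleteEdges C).connectedComponentMk v = K ∧
          ∃ c : (G.deleteEdges C).Walk v v, c.IsCycle := by
  classical
  obtain ⟨hne, hCE, hpair, hdisc, hmin⟩ := hC
  set H := G.deleteEdges C with hH
  -- pairwise matching gives: every vertex has H-degree ≥ 2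
  have hdeg : ∀ x : V, 2 ≤ (H.neighborSet x).ncard := by
    intro x
    have hset : H.neighborSet x = G.neighborSet x \ {y | s(x, y) ∈ C} := by
      ext y
      simp [hH, SimpleGraph.deleteEdges_adj, SimpleGraph.mem_neighborSet]
    have hsub : (G.neighborSet x ∩ {y | s(x, y) ∈ C}).Subsingleton := by
      intro y1 hy1 y2 hy2
      by_contra hne'
      have hedne : s(x, y1) ≠ s(x, y2) := fun h => hne' (Sym2.congr_right.mp h)
      exact hpair hy1.2 hy2.2 hedne x ⟨Sym2.mem_mk_left x y1, Sym2.mem_mk_left x y2⟩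
    have h1 : (G.neighborSet x ∩ {y | s(x, y) ∈ C}).ncard ≤ 1 :=
      (Set.ncard_le_one_iff (Set.toFinite _)).mpr fun ha hb => hsub ha hb
    have hdiff : G.neighborSet x \ {y | s(x, y) ∈ C}
        = G.neighborSet x \ (G.neighborSet x ∩ {y | s(x, y) ∈ C}) := by
      rw [Set.diff_self_inter]
    have hcard : (G.neighborSet x \ (G.neighborSet x ∩ {y | s(x, y) ∈ C})).ncard
        = (G.neighborSet x).ncard - (G.neighborSet x ∩ {y | s(x, y) ∈ C}).ncard :=
      Set.ncard_diff Set.inter_subset_left (Set.toFinite _)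
    rw [hset, hdiff, hcard, hcub x]
    omega
  -- get an edge s(a,b) ∈ C
  obtain ⟨a, b, hab⟩ : ∃ a b : V, s(a, b) ∈ C := by
    obtain ⟨e, he⟩ := hne
    exact Sym2.exists.mp ⟨e, he⟩
  -- the graph with only s(a,b) removed less is connected
  have hconn' : (G.deleteEdges (C \ {s(a, b)})).Connected :=
    hmin _ (Set.sdiff_singleton_ssubset.mpr hab)
  have hstep : ∀ x y : V, (G.deleteEdges (C \ {s(a, b)})).Adj x y →
      H.Adj x y ∨ s(x, y) = s(a, b) := by
    intro x y hxy
    rw [SimpleGraph.deleteEdges_adj] at hxy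
    by_cases hc : s(x, y) ∈ C
    · right
      by_contra hne'
      exact hxy.2 ⟨hc, hne'⟩
    · left
      rw [hH, SimpleGraph.deleteEdges_adj]
      exact ⟨hxy.1, hc⟩
  have hreach : ∀ v : V, H.Reachable v a ∨ H.Reachable v b := by
    intro v
    exact reach_or_aux hstep ((hconn'.preconnected v a).some)
  have hKab : H.connectedComponentMk a ≠ H.connectedComponentMk b := by
    intro h
    apply hdisc
    rw [SimpleGraph.ConnectedComponent.eq] at h
    rw [connected_iff_exists_forall_reachable]
    refine ⟨a, fun w => ?_⟩
    rcases hreach w with hw | hw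
    · exact hw.symm
    · exact h.trans hw.symm
  constructor
  · rw [Nat.card_eq_two_iff]
    refine ⟨H.connectedComponentMk a, H.connectedComponentMk b, hKab, ?_⟩
    ext K
    simp only [Set.mem_insert_iff, Set.mem_singleton_iff, Set.mem_univ, iff_true]
    obtain ⟨v, rfl⟩ := K.exists_rep
    rcases hreach v with hv | hv
    · exact Or.inl (ConnectedComponent.sound hv)
    · exact Or.inr (ConnectedComponent.sound hv)
  · intro K
    obtain ⟨v, hv⟩ := K.exists_rep
    obtain ⟨w, hvw, c, hc⟩ := exists_cycle_of_two_le hdeg v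
    exact ⟨w, by rw [← hv]; exact (ConnectedComponent.sound hvw).symm, c, hc⟩
end

section
/- Let Γ be a connected cubic graph that admits at least one cyclic edge cut, and let C be a cyclic edge cut of minimum cardinality among all cyclic edge cuts of Γ. Then C is a cracker of Γ; consequently, the cyclic edge connectivity of Γ equals the minimum size of a cracker in Γ. -/
open SimpleGraph

/-- A cyclic edge cut: a set of edges whose deletion disconnects the graph in such a
way that at least two of the resulting connected components contain a cycle. -/
def IsCyclicEdgeCut {V : Type*} (G : SimpleGraph V) (C : Set (Sym2 V)) : Prop :=
  C ⊆ G.edgeSet ∧ ¬(G.deleteEdges C).Connected ∧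
    ∃ K₁ K₂ : (G.deleteEdges C).ConnectedComponent, K₁ ≠ K₂ ∧
      (∃ v : V, (G.deleteEdges C).connectedComponentMk v = K₁ ∧
        ∃ c : (G.deleteEdges C).Walk v v, c.IsCycle) ∧
      (∃ v : V, (G.deleteEdges C).connectedComponentMk v = K₂ ∧
        ∃ c : (G.deleteEdges C).Walk v v, c.IsCycle)

/-!
Let `C` be a minimum cyclic edge cut, and `K₁ ≠ K₂` components of `Γ - C` containing cycles.
The edge boundary of `K₁` lies in `C` and is itself a cyclic edge cut, so by minimality it is
`C`; likewise for `K₂`. Hence every edge of `C` joins `K₁` to `K₂`, every vertex lies in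
`K₁ ∪ K₂`, and putting back any edge of `C` reconnects the graph. If two edges of `C` met at a
vertex `v` on the `K₁` side, then `v` would have at most one neighbour in `K₁`, hence lie on no
cycle there, and moving `v` across the cut would trade at least two cut edges for at most one:
a smaller cyclic edge cut. Conversely, deleting a matching from a cubic graph leaves minimum
degree two, so each remaining component contains a cycle and every cracker is a cyclic edge cut.
-/

namespace SimpleGraph

variable {V : Type*} {G : SimpleGraph V} {S : Set V} {C : Set (Sym2 V)} {u v w : V}

def edgeBoundary (G : SimpleGraph V) (S : Set V) : Set (Sym2 V) :=
  {e | ∃ a ∈ S, ∃ b ∉ S, G.Adj a b ∧ s(a, b) = e}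

lemma mk_mem_edgeBoundary_iff {a b : V} :
    s(a, b) ∈ G.edgeBoundary S ↔ G.Adj a b ∧ (a ∈ S ↔ b ∉ S) := by
  constructor
  · rintro ⟨x, hx, y, hy, hxy, he⟩
    rcases Sym2.eq_iff.mp he with ⟨rfl, rfl⟩ | ⟨rfl, rfl⟩
    exacts [⟨hxy, iff_of_true hx hy⟩, ⟨hxy.symm, iff_of_false hy (not_not.mpr hx)⟩]
  · rintro ⟨hab, hS⟩
    by_cases ha : a ∈ S
    · exact ⟨a, ha, b, hS.mp ha, hab, rfl⟩
    · exact ⟨b, not_not.mp (mt hS.mpr ha), a, ha, hab.symm, Sym2.eq_swap⟩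

lemma edgeBoundary_subset_edgeSet : G.edgeBoundary S ⊆ G.edgeSet := by
  rintro _ ⟨a, -, b, -, hab, rfl⟩
  exact hab

@[simp]
lemma edgeBoundary_compl : G.edgeBoundary Sᶜ = G.edgeBoundary S := by
  ext e
  induction e using Sym2.ind
  simp only [mk_mem_edgeBoundary_iff, Set.mem_compl_iff]
  tauto

lemma exists_mk_eq_of_mem_edgeBoundary {e : Sym2 V} (he : e ∈ G.edgeBoundary S) (hv : v ∈ e)
    (hvS : v ∈ S) : ∃ b ∈ G.neighborSet v \ S, e = s(v, b) := by
  obtain ⟨a, ha, b, hb, hab, rfl⟩ := he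
  rcases Sym2.mem_iff.mp hv with rfl | rfl
  exacts [⟨b, ⟨hab, hb⟩, rfl⟩, absurd hvS hb]

lemma edgeBoundary_supp_subset (K : (G.deleteEdges C).ConnectedComponent) :
    G.edgeBoundary K.supp ⊆ C := by
  rintro _ ⟨a, ha, b, hb, hab, rfl⟩
  by_contra hC
  rw [ConnectedComponent.mem_supp_iff] at ha hb
  exact hb (ha ▸ (ConnectedComponent.connectedComponentMk_eq_of_adj
    ((deleteEdges_adj ..).mpr ⟨hab, hC⟩)).symm)

lemma Reachable.edgeBoundary_nonempty (h : G.Reachable u w) (hu : u ∈ S) (hw : w ∉ S) :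
    (G.edgeBoundary S).Nonempty := by
  obtain ⟨p⟩ := h
  obtain ⟨d, -, hd, hd'⟩ := p.exists_boundary_dart S hu hw
  exact ⟨d.edge, d.fst, hd, d.snd, hd', d.adj, rfl⟩

lemma not_reachable_deleteEdges_edgeBoundary (hu : u ∈ S) (hw : w ∉ S) :
    ¬(G.deleteEdges (G.edgeBoundary S)).Reachable u w := by
  intro h
  obtain ⟨_, a, ha, b, hb, hab, rfl⟩ := h.edgeBoundary_nonempty hu hw
  rw [deleteEdges_adj] at hab
  exact hab.2 ⟨a, ha, b, hb, hab.1, rfl⟩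

lemma Walk.notMem_edgeBoundary_of_support_subset (p : G.Walk u w)
    (hp : ∀ x ∈ p.support, x ∈ S) : ∀ e ∈ p.edges, e ∉ G.edgeBoundary S := by
  rintro e he ⟨a, -, b, hb, -, rfl⟩
  exact hb (hp b (p.snd_mem_support_of_mem_edges he))

lemma isCyclicEdgeCut_of_not_reachable (hsub : C ⊆ G.edgeSet) {a b : V}
    (hab : ¬(G.deleteEdges C).Reachable a b)
    {c₁ : (G.deleteEdges C).Walk a a} (hc₁ : c₁.IsCycle)
    {c₂ : (G.deleteEdges C).Walk b b} (hc₂ : c₂.IsCycle) :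
    IsCyclicEdgeCut G C :=
  ⟨hsub, fun h => hab (h.preconnected a b), _, _, fun h => hab (ConnectedComponent.exact h),
    ⟨a, rfl, c₁, hc₁⟩, ⟨b, rfl, c₂, hc₂⟩⟩

lemma isCyclicEdgeCut_edgeBoundary
    {c₁ : G.Walk u u} (hc₁ : c₁.IsCycle) (h₁ : ∀ x ∈ c₁.support, x ∈ S)
    {c₂ : G.Walk w w} (hc₂ : c₂.IsCycle) (h₂ : ∀ x ∈ c₂.support, x ∉ S) :
    IsCyclicEdgeCut G (G.edgeBoundary S) := by
  have h₂' : ∀ e ∈ c₂.edges, e ∉ G.edgeBoundary S := by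
    simpa using c₂.notMem_edgeBoundary_of_support_subset (S := Sᶜ) h₂
  exact isCyclicEdgeCut_of_not_reachable edgeBoundary_subset_edgeSet
    (not_reachable_deleteEdges_edgeBoundary (h₁ u c₁.start_mem_support)
      (h₂ w c₂.start_mem_support))
    (hc₁.toDeleteEdges _ _ (c₁.notMem_edgeBoundary_of_support_subset h₁))
    (hc₂.toDeleteEdges _ _ h₂')

lemma Walk.IsCycle.two_le_ncard_neighborSet_inter [Finite V] {c : G.Walk u u} (hc : c.IsCycle)
    (hS : ∀ x ∈ c.support, x ∈ S) (hv : v ∈ c.support) : 2 ≤ (G.neighborSet v ∩ S).ncard := by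
  rw [← hc.ncard_neighborSet_toSubgraph_eq_two hv]
  exact Set.ncard_le_ncard fun x hx =>
    ⟨c.toSubgraph.adj_sub hx, hS x (c.mem_verts_toSubgraph.mp hx.snd_mem)⟩

lemma edgeBoundary_diff_singleton_subset (G : SimpleGraph V) (S : Set V) (v : V) :
    G.edgeBoundary (S \ {v}) ⊆ (G.edgeBoundary S \ (fun b => s(v, b)) '' (G.neighborSet v \ S)) ∪
      (fun b => s(v, b)) '' (G.neighborSet v ∩ S) := by
  rintro _ ⟨a, ⟨haS, hav⟩, b, hb, hab, rfl⟩
  by_cases hbv : b = v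
  · subst hbv
    exact Or.inr ⟨a, ⟨hab.symm, haS⟩, Sym2.eq_swap⟩
  · have hbS : b ∉ S := fun h => hb ⟨h, hbv⟩
    refine Or.inl ⟨⟨a, haS, b, hbS, hab, rfl⟩, ?_⟩
    rintro ⟨c, -, hc⟩
    rcases Sym2.eq_iff.mp hc with ⟨h, -⟩ | ⟨h, -⟩
    exacts [hav h.symm, hbv h.symm]

lemma ncard_edgeBoundary_diff_singleton_add_le [Finite V] (hv : v ∈ S) :
    (G.edgeBoundary (S \ {v})).ncard + (G.neighborSet v \ S).ncard ≤
      (G.edgeBoundary S).ncard + (G.neighborSet v ∩ S).ncard := by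
  have hout : (fun b => s(v, b)) '' (G.neighborSet v \ S) ⊆ G.edgeBoundary S := by
    rintro _ ⟨b, ⟨hb, hbS⟩, rfl⟩
    exact ⟨v, hv, b, hbS, hb, rfl⟩
  have h₁ := Set.ncard_le_ncard (edgeBoundary_diff_singleton_subset G S v)
  have h₂ := Set.ncard_union_le (G.edgeBoundary S \ (fun b => s(v, b)) '' (G.neighborSet v \ S))
    ((fun b => s(v, b)) '' (G.neighborSet v ∩ S))
  have h₃ := Set.ncard_sdiff hout
  have h₄ : ((fun b => s(v, b)) '' (G.neighborSet v \ S)).ncard = (G.neighborSet v \ S).ncard :=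
    Set.ncard_image_of_injective _ fun _ _ => Sym2.congr_right.mp
  have h₅ := Set.ncard_image_le (f := fun b => s(v, b)) (s := G.neighborSet v ∩ S)
  have h₆ := Set.ncard_le_ncard hout
  omega

lemma ncard_neighborSet_diff_le_one [Finite V] (hcub : IsCubic G)
    {c₁ : G.Walk u u} (hc₁ : c₁.IsCycle) (h₁ : ∀ x ∈ c₁.support, x ∈ S)
    {c₂ : G.Walk w w} (hc₂ : c₂.IsCycle) (h₂ : ∀ x ∈ c₂.support, x ∉ S)
    (hmin : ∀ C, IsCyclicEdgeCut G C → (G.edgeBoundary S).ncard ≤ C.ncard) (hv : v ∈ S) :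
    (G.neighborSet v \ S).ncard ≤ 1 := by
  by_contra! hout
  have hin : (G.neighborSet v ∩ S).ncard ≤ 1 := by
    have := Set.ncard_inter_add_ncard_sdiff_eq_ncard (G.neighborSet v) S
    rw [hcub v] at this
    omega
  have hvc₁ : v ∉ c₁.support := fun h => by
    have := hc₁.two_le_ncard_neighborSet_inter h₁ h
    omega
  have hcut : IsCyclicEdgeCut G (G.edgeBoundary (S \ {v})) :=
    isCyclicEdgeCut_edgeBoundary hc₁ (fun x hx => ⟨h₁ x hx, fun h => hvc₁ (h ▸ hx)⟩)
      hc₂ (fun x hx h => h₂ x hx h.1)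
  have := hmin _ hcut
  have := ncard_edgeBoundary_diff_singleton_add_le (G := G) hv
  omega

lemma edgeBoundary_pairwise_disjoint [Finite V] (hcub : IsCubic G)
    {c₁ : G.Walk u u} (hc₁ : c₁.IsCycle) (h₁ : ∀ x ∈ c₁.support, x ∈ S)
    {c₂ : G.Walk w w} (hc₂ : c₂.IsCycle) (h₂ : ∀ x ∈ c₂.support, x ∉ S)
    (hmin : ∀ C, IsCyclicEdgeCut G C → (G.edgeBoundary S).ncard ≤ C.ncard) :
    (G.edgeBoundary S).Pairwise (fun e f => ∀ v : V, ¬(v ∈ e ∧ v ∈ f)) := by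
  intro e he f hf hef v ⟨hve, hvf⟩
  wlog hv : v ∈ S generalizing S u w c₁ c₂
  · rw [← edgeBoundary_compl] at he hf hmin
    exact this hc₂ h₂ hc₁ (fun x hx h => h (h₁ x hx)) hmin he hf hv
  obtain ⟨a, ha, rfl⟩ := exists_mk_eq_of_mem_edgeBoundary he hve hv
  obtain ⟨b, hb, rfl⟩ := exists_mk_eq_of_mem_edgeBoundary hf hvf hv
  have hab : a ≠ b := fun h => hef (h ▸ rfl)
  exact (ncard_neighborSet_diff_le_one hcub hc₁ h₁ hc₂ h₂ hmin hv).not_gt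
    ((Set.one_lt_ncard_iff).mpr ⟨a, b, ha, hb, hab⟩)

lemma ConnectedComponent.exists_isCycle_support_subset {K : (G.deleteEdges C).ConnectedComponent}
    (h : ∃ v, (G.deleteEdges C).connectedComponentMk v = K ∧
      ∃ c : (G.deleteEdges C).Walk v v, c.IsCycle) :
    ∃ (u : V) (c : G.Walk u u), c.IsCycle ∧ ∀ x ∈ c.support, x ∈ K.supp := by
  classical
  obtain ⟨v, rfl, c, hc⟩ := h
  refine ⟨v, c.mapLe (deleteEdges_le C), hc.mapLe _, fun x hx => ?_⟩
  rw [Walk.support_mapLe_eq_support] at hx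
  exact ConnectedComponent.eq.mpr ⟨(c.takeUntil x hx).reverse⟩

lemma edgeBoundary_supp_eq_of_min [Finite V]
    (hmin : ∀ C', IsCyclicEdgeCut G C' → C.ncard ≤ C'.ncard)
    {K : (G.deleteEdges C).ConnectedComponent}
    {c₁ : G.Walk u u} (hc₁ : c₁.IsCycle) (h₁ : ∀ x ∈ c₁.support, x ∈ K.supp)
    {c₂ : G.Walk w w} (hc₂ : c₂.IsCycle) (h₂ : ∀ x ∈ c₂.support, x ∉ K.supp) :
    G.edgeBoundary K.supp = C :=
  Set.eq_of_subset_of_ncard_le (edgeBoundary_supp_subset K)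
    (hmin _ (isCyclicEdgeCut_edgeBoundary hc₁ h₁ hc₂ h₂))

lemma mem_supp_or_mem_supp_of_edgeBoundary_eq (hG : G.Connected)
    {K₁ K₂ : (G.deleteEdges C).ConnectedComponent} (hK : K₁ ≠ K₂)
    (h₁ : G.edgeBoundary K₁.supp = C) (h₂ : G.edgeBoundary K₂.supp = C) (x : V) :
    x ∈ K₁.supp ∨ x ∈ K₂.supp := by
  by_contra! hx
  obtain ⟨v, hv⟩ := K₁.nonempty_supp
  obtain ⟨_, a, ha, b, hb, hab, rfl⟩ := (hG.preconnected x v).edgeBoundary_nonempty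
    (S := ((G.deleteEdges C).connectedComponentMk x).supp) rfl
    fun h : _ = _ => hx.1 (h.symm.trans ((ConnectedComponent.mem_supp_iff _ _).mp hv))
  have he := edgeBoundary_supp_subset _ ⟨a, ha, b, hb, hab, rfl⟩
  have he₁ := (mk_mem_edgeBoundary_iff.mp (h₁ ▸ he)).2
  have he₂ := (mk_mem_edgeBoundary_iff.mp (h₂ ▸ he)).2
  simp only [ConnectedComponent.mem_supp_iff] at ha hb hx he₁ he₂
  grind

lemma connected_deleteEdges_of_ssubset (hG : G.Connected)
    {K₁ K₂ : (G.deleteEdges C).ConnectedComponent} (hK : K₁ ≠ K₂)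
    (h₁ : G.edgeBoundary K₁.supp = C) (h₂ : G.edgeBoundary K₂.supp = C)
    {C' : Set (Sym2 V)} (hC' : C' ⊂ C) : (G.deleteEdges C').Connected := by
  obtain ⟨e, heC, heC'⟩ := Set.exists_of_ssubset hC'
  obtain ⟨a, ha, b, hb, hab, rfl⟩ := h₁ ▸ heC
  have hb₂ : b ∈ K₂.supp :=
    not_not.mp (mt (mk_mem_edgeBoundary_iff.mp (h₂ ▸ heC)).2.mpr fun h => hK (ha.symm.trans h))
  have hle : G.deleteEdges C ≤ G.deleteEdges C' := deleteEdges_anti hC'.subset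
  have hab' : (G.deleteEdges C').Adj a b := (deleteEdges_adj ..).mpr ⟨hab, heC'⟩
  refine (connected_iff_exists_forall_reachable _).mpr ⟨a, fun x => ?_⟩
  rcases mem_supp_or_mem_supp_of_edgeBoundary_eq hG hK h₁ h₂ x with hx | hx
  · exact (ConnectedComponent.exact (ha.trans hx.symm)).mono hle
  · exact hab'.reachable.trans ((ConnectedComponent.exact (hb₂.trans hx.symm)).mono hle)

lemma two_le_ncard_neighborSet_deleteEdges [Finite V] (hcub : IsCubic G)
    (hC : C.Pairwise fun e f => ∀ v : V, ¬(v ∈ e ∧ v ∈ f)) (v : V) :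
    2 ≤ ((G.deleteEdges C).neighborSet v).ncard := by
  have hD : {b | s(v, b) ∈ C}.ncard ≤ 1 := (Set.ncard_le_one).mpr fun a ha b hb =>
    Sym2.congr_right.mp (hC.eq ha hb fun h => h v ⟨Sym2.mem_mk_left v a, Sym2.mem_mk_left v b⟩)
  have hsub : G.neighborSet v \ {b | s(v, b) ∈ C} ⊆ (G.deleteEdges C).neighborSet v :=
    fun b hb => (deleteEdges_adj ..).mpr hb
  have h₁ := Set.le_ncard_sdiff {b | s(v, b) ∈ C} (G.neighborSet v)
  have h₂ := Set.ncard_le_ncard hsub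
  rw [hcub v] at h₁
  omega

lemma exists_isPath_forall_adj_mem_support [Finite V] (G : SimpleGraph V) (u : V) :
    ∃ (w : V) (p : G.Walk u w), p.IsPath ∧ ∀ y, G.Adj w y → y ∈ p.support := by
  have := Fintype.ofFinite V
  let L : Set ℕ := {n | ∃ w, ∃ p : G.Walk u w, p.IsPath ∧ p.length = n}
  have hbdd : BddAbove L := ⟨Fintype.card V, by rintro _ ⟨w, p, hp, rfl⟩; exact hp.length_lt.le⟩
  obtain ⟨w, p, hp, hlen⟩ := Nat.sSup_mem (s := L) ⟨0, u, .nil, .nil, rfl⟩ hbdd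
  refine ⟨w, p, hp, fun y hy => ?_⟩
  by_contra hyp
  have := le_csSup hbdd ⟨y, p.concat hy, hp.concat hyp hy, p.length_concat hy⟩
  omega

lemma Walk.IsPath.exists_isCycle_of_forall_adj_mem_support {p : G.Walk u w}
    (hp : p.IsPath) (hadj : ∀ y, G.Adj w y → y ∈ p.support) (hdeg : 2 ≤ (G.neighborSet w).ncard) :
    ∃ c : G.Walk w w, c.IsCycle := by
  classical
  have hsupp : ∀ y, G.Adj w y → y ∈ p.reverse.support := fun y hy => by
    simpa using hadj y hy
  obtain ⟨z, hz⟩ := Set.nonempty_of_ncard_ne_zero (show (G.neighborSet w).ncard ≠ 0 by omega)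
  generalize hr : p.reverse = r at hsupp
  have hrp : r.IsPath := hr ▸ hp.reverse
  cases r with
  | nil => exact absurd (List.mem_singleton.mp (hsupp z hz)).symm hz.ne
  | cons hwy q =>
    obtain ⟨hq, hwq⟩ := (cons_isPath_iff _ _).mp hrp
    obtain ⟨x, hx, hxy⟩ := Set.exists_ne_of_one_lt_ncard hdeg _
    have hxq : x ∈ q.support := by
      simpa [hx.ne.symm] using hsupp x hx
    set t := q.takeUntil x hxq
    have hwt : w ∉ t.support := fun h => hwq (q.support_takeUntil_subset_support hxq h)
    refine ⟨cons hwy (t.concat hx.symm), (cons_isCycle_iff _ _).mpr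
      ⟨(hq.takeUntil hxq).concat hwt hx.symm, fun h => ?_⟩⟩
    rw [edges_concat, List.concat_eq_append, List.mem_append, List.mem_singleton] at h
    rcases h with h | h
    · exact hwt (t.fst_mem_support_of_mem_edges h)
    · rcases Sym2.eq_iff.mp h with ⟨rfl, -⟩ | ⟨-, rfl⟩
      exacts [hx.ne rfl, hxy rfl]

lemma exists_reachable_isCycle_of_two_le_ncard [Finite V]
    (hdeg : ∀ v, 2 ≤ (G.neighborSet v).ncard) (u : V) :
    ∃ w, G.Reachable u w ∧ ∃ c : G.Walk w w, c.IsCycle := by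
  obtain ⟨w, p, hp, hadj⟩ := exists_isPath_forall_adj_mem_support G u
  exact ⟨w, ⟨p⟩, hp.exists_isCycle_of_forall_adj_mem_support hadj (hdeg w)⟩

end SimpleGraph

lemma IsCracker.isCyclicEdgeCut {V : Type*} [Finite V] {G : SimpleGraph V} {C : Set (Sym2 V)}
    (hcub : IsCubic G) (hcr : IsCracker G C) : IsCyclicEdgeCut G C := by
  obtain ⟨⟨e, -⟩, hsub, hpair, hdisc, -⟩ := hcr
  have : Nonempty V := ⟨(Quot.out e).1⟩
  obtain ⟨x, y, hxy⟩ : ∃ x y, ¬(G.deleteEdges C).Reachable x y := by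
    by_contra! h
    exact hdisc ⟨h⟩
  have hdeg := two_le_ncard_neighborSet_deleteEdges hcub hpair
  obtain ⟨w₁, hw₁, c₁, hc₁⟩ := exists_reachable_isCycle_of_two_le_ncard hdeg x
  obtain ⟨w₂, hw₂, c₂, hc₂⟩ := exists_reachable_isCycle_of_two_le_ncard hdeg y
  exact isCyclicEdgeCut_of_not_reachable hsub (fun h => hxy (hw₁.trans (h.trans hw₂.symm))) hc₁ hc₂

lemma sInf_ncard_eq_of_forall_le {α : Type*} {P : Set α → Prop} {s : Set α} (hs : P s)
    (hmin : ∀ t, P t → s.ncard ≤ t.ncard) : sInf {n | ∃ t, P t ∧ t.ncard = n} = s.ncard :=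
  IsLeast.csInf_eq ⟨⟨s, hs, rfl⟩, by rintro _ ⟨t, ht, rfl⟩; exact hmin t ht⟩

/-- in a connected cubic graph, a minimum-cardinality cyclic edge cut is a
cracker; consequently the cyclic edge connectivity equals the minimum size of a cracker. -/
theorem min_cyclicEdgeCut_isCracker {V : Type*} [Fintype V] (G : SimpleGraph V)
    (hG : G.Connected) (hcub : IsCubic G)
    (C : Set (Sym2 V)) (hC : IsCyclicEdgeCut G C)
    (hmin : ∀ C' : Set (Sym2 V), IsCyclicEdgeCut G C' → C.ncard ≤ C'.ncard) :
    IsCracker G C ∧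
      sInf {n : ℕ | ∃ C' : Set (Sym2 V), IsCyclicEdgeCut G C' ∧ C'.ncard = n} =
        sInf {n : ℕ | ∃ C' : Set (Sym2 V), IsCracker G C' ∧ C'.ncard = n} := by
  obtain ⟨hsub, hdisc, K₁, K₂, hK, hcyc₁, hcyc₂⟩ := hC
  obtain ⟨u₁, c₁, hc₁, hc₁K₁⟩ := ConnectedComponent.exists_isCycle_support_subset hcyc₁
  obtain ⟨u₂, c₂, hc₂, hc₂K₂⟩ := ConnectedComponent.exists_isCycle_support_subset hcyc₂
  have hc₁K₂ : ∀ x ∈ c₁.support, x ∉ K₂.supp := fun x hx h => hK ((hc₁K₁ x hx).symm.trans h)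
  have hc₂K₁ : ∀ x ∈ c₂.support, x ∉ K₁.supp := fun x hx h => hK (h.symm.trans (hc₂K₂ x hx))
  have hC₁ := edgeBoundary_supp_eq_of_min hmin hc₁ hc₁K₁ hc₂ hc₂K₁
  have hC₂ := edgeBoundary_supp_eq_of_min hmin hc₂ hc₂K₂ hc₁ hc₁K₂
  have hcr : IsCracker G C := by
    refine ⟨Set.nonempty_iff_ne_empty.mpr ?_, hsub, ?_, hdisc,
      fun C' hC' => connected_deleteEdges_of_ssubset hG hK hC₁ hC₂ hC'⟩
    · rintro rfl
      exact hdisc (by simpa using hG)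
    · rw [← hC₁]
      exact edgeBoundary_pairwise_disjoint hcub hc₁ hc₁K₁ hc₂ hc₂K₁ (by rwa [hC₁])
  have hcyc : IsCyclicEdgeCut G C := ⟨hsub, hdisc, K₁, K₂, hK, hcyc₁, hcyc₂⟩
  exact ⟨hcr, (sInf_ncard_eq_of_forall_le hcyc hmin).trans
    (sInf_ncard_eq_of_forall_le hcr fun C' hC' => hmin C' (hC'.isCyclicEdgeCut hcub)).symm⟩
end

section
/- The complete bipartite graph K_{3,3} contains no cracker. -/
/-!
Deleting a matching from `K_{3,3}` leaves a connected graph, so no cracker can disconnect it.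
If the edge `ab` was deleted, pick `b' ≠ b` and two vertices `a₁ ≠ a₂` on the side of `a`,
both different from `a`. At most one of `a₁b'`, `a₂b'` is deleted; if `a'b'` survives, then
`a - b' - a' - b` is a path avoiding the matching, since `ab` is the only deleted edge at `a`
and at `b`.
-/

open SimpleGraph

lemma exists_pair_ne_of_three_le_card {α : Type*} [Fintype α] (hα : 3 ≤ Fintype.card α)
    (a : α) :
    ∃ a₁ a₂ : α, a₁ ≠ a ∧ a₂ ≠ a ∧ a₁ ≠ a₂ := by
  classical
  have : 1 < (Finset.univ.erase a).card := by
    rw [Finset.card_erase_of_mem (Finset.mem_univ a), Finset.card_univ]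
    omega
  obtain ⟨a₁, h₁, a₂, h₂, hne⟩ := Finset.one_lt_card.mp this
  exact ⟨a₁, a₂, Finset.ne_of_mem_erase h₁, Finset.ne_of_mem_erase h₂, hne⟩

lemma eq_of_mem_of_pairwise_disjoint {V : Type*} {C : Set (Sym2 V)}
    (hC : C.Pairwise fun e f => ∀ v : V, ¬(v ∈ e ∧ v ∈ f))
    {e f : Sym2 V} (he : e ∈ C) (hf : f ∈ C) {v : V} (hve : v ∈ e) (hvf : v ∈ f) : e = f :=
  by_contra fun hne => hC he hf hne v ⟨hve, hvf⟩

namespace SimpleGraph.completeBipartiteGraph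

variable {α β : Type*} {C : Set (Sym2 (α ⊕ β))}

lemma deleteEdges_adj_inl_inr {a : α} {b : β} (h : s(.inl a, .inr b) ∉ C) :
    ((completeBipartiteGraph α β).deleteEdges C).Adj (.inl a) (.inr b) :=
  deleteEdges_adj.mpr ⟨by simp, h⟩

variable (hC : C.Pairwise fun e f => ∀ v : α ⊕ β, ¬(v ∈ e ∧ v ∈ f))
include hC

lemma eq_left_of_mem_of_mem {a a' : α} {b : β} (h : s(.inl a, .inr b) ∈ C)
    (h' : s(.inl a', .inr b) ∈ C) : a = a' := by
  simpa [Sym2.eq_iff] using eq_of_mem_of_pairwise_disjoint hC h h' (v := .inr b) (by simp) (by simp)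

lemma eq_right_of_mem_of_mem {a : α} {b b' : β} (h : s(.inl a, .inr b) ∈ C)
    (h' : s(.inl a, .inr b') ∈ C) : b = b' := by
  simpa [Sym2.eq_iff] using eq_of_mem_of_pairwise_disjoint hC h h' (v := .inl a) (by simp) (by simp)

variable [Fintype α] [Nontrivial β]

lemma deleteEdges_reachable_inl_inr (hα : 3 ≤ Fintype.card α) (a : α) (b : β) :
    ((completeBipartiteGraph α β).deleteEdges C).Reachable (.inl a) (.inr b) := by
  by_cases hab : s(.inl a, .inr b) ∈ C
  swap
  · exact (deleteEdges_adj_inl_inr hab).reachable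
  obtain ⟨b', hb'⟩ := exists_ne b
  obtain ⟨a₁, a₂, ha₁, ha₂, ha₁₂⟩ := exists_pair_ne_of_three_le_card hα a
  obtain ⟨a', ha', ha'b'⟩ : ∃ a', a' ≠ a ∧ s(.inl a', .inr b') ∉ C := by
    by_cases h₁ : s(.inl a₁, .inr b') ∈ C
    · exact ⟨a₂, ha₂, fun h₂ => ha₁₂ (eq_left_of_mem_of_mem hC h₁ h₂)⟩
    · exact ⟨a₁, ha₁, h₁⟩
  have hab' : s(.inl a, .inr b') ∉ C := fun h => hb' (eq_right_of_mem_of_mem hC hab h).symm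
  have ha'b : s(.inl a', .inr b) ∉ C := fun h => ha' (eq_left_of_mem_of_mem hC h hab)
  exact (deleteEdges_adj_inl_inr hab').reachable.trans
    ((deleteEdges_adj_inl_inr ha'b').reachable.symm.trans (deleteEdges_adj_inl_inr ha'b).reachable)

lemma deleteEdges_connected (hα : 3 ≤ Fintype.card α) :
    ((completeBipartiteGraph α β).deleteEdges C).Connected := by
  have hcross := deleteEdges_reachable_inl_inr hC hα
  obtain ⟨a₀⟩ : Nonempty α := Fintype.card_pos_iff.mp (by omega)
  obtain ⟨b₀⟩ : Nonempty β := inferInstance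
  refine ⟨fun u v => ?_⟩
  rcases u with a | b <;> rcases v with a' | b'
  · exact (hcross a b₀).trans (hcross a' b₀).symm
  · exact hcross a b'
  · exact (hcross a' b).symm
  · exact (hcross a₀ b).symm.trans (hcross a₀ b')

end SimpleGraph.completeBipartiteGraph

/-- the complete bipartite graph K_{3,3} contains no cracker. -/
theorem K33_no_cracker :
    ¬ ∃ C : Set (Sym2 (Fin 3 ⊕ Fin 3)),
      IsCracker (completeBipartiteGraph (Fin 3) (Fin 3)) C := by
  rintro ⟨C, -, -, hmatching, hdisconnected, -⟩
  exact hdisconnected (completeBipartiteGraph.deleteEdges_connected hmatching (by simp))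
end

section
/- Let Γ1 = (V1, E1) and Γ2 = (V2, E2) be vertex-disjoint connected cubic graphs, let (a,b) ∈ E1 and (c,d) ∈ E2, and let v1, v2 be two new vertices. Let ΓD be the graph with vertex set V1 ∪ V2 ∪ {v1, v2} and edge set (E1 \ {(a,b)}) ∪ (E2 \ {(c,d)}) ∪ {(a,v1), (b,v1), (c,v2), (d,v2), (v1,v2)}. Then ΓD is a connected cubic graph and the edge (v1,v2) is a bridge of ΓD (i.e., {(v1,v2)} is a 1-cracker). -/
open SimpleGraph

/-- The type 1 breeding operation: delete edges (a,b) of Γ₁ and (c,d) of Γ₂, add two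
new vertices v₁, v₂ and the edges (a,v₁), (b,v₁), (c,v₂), (d,v₂), (v₁,v₂). -/
def breed1 {V₁ V₂ : Type*} (G₁ : SimpleGraph V₁) (G₂ : SimpleGraph V₂)
    (a b : V₁) (c d : V₂) : SimpleGraph ((V₁ ⊕ V₂) ⊕ Fin 2) :=
  SimpleGraph.fromRel (fun p q =>
    (∃ x y : V₁, p = Sum.inl (Sum.inl x) ∧ q = Sum.inl (Sum.inl y) ∧
        G₁.Adj x y ∧ s(x, y) ≠ s(a, b)) ∨
    (∃ x y : V₂, p = Sum.inl (Sum.inr x) ∧ q = Sum.inl (Sum.inr y) ∧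
        G₂.Adj x y ∧ s(x, y) ≠ s(c, d)) ∨
    (p = Sum.inl (Sum.inl a) ∧ q = Sum.inr 0) ∨
    (p = Sum.inl (Sum.inl b) ∧ q = Sum.inr 0) ∨
    (p = Sum.inl (Sum.inr c) ∧ q = Sum.inr 1) ∨
    (p = Sum.inl (Sum.inr d) ∧ q = Sum.inr 1) ∨
    (p = Sum.inr 0 ∧ q = Sum.inr 1))

/-!
A walk of Γ₁ survives in the bred graph once the deleted edge `ab` is replaced by the path
`a v₁ b`, so every vertex of Γ₁ reaches `v₁`, and likewise every vertex of Γ₂ reaches `v₂`.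
A vertex `x` of Γ₁ keeps its neighbours, except that its partner across `ab` (if any) is
replaced by `v₁`; this relabelling is injective, so degrees are preserved, and `v₁` has the
three neighbours `a`, `b`, `v₂`. Exchanging the roles of Γ₁ and Γ₂ (and of `v₁` and `v₂`) is an
isomorphism, which transfers both facts to the other side. Finally every edge other than
`v₁v₂` stays inside `V₁ ∪ {v₁}` or inside `V₂ ∪ {v₂}`, so `v₁v₂` is a bridge.
-/

open Sum

namespace SimpleGraph

variable {V W β : Type*} {G : SimpleGraph V} {G' : SimpleGraph W} {u v : V}

lemma Reachable.map_of_adj {f : V → W} (hf : ∀ ⦃x y⦄, G.Adj x y → G'.Reachable (f x) (f y))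
    (h : G.Reachable u v) : G'.Reachable (f u) (f v) := by
  obtain ⟨w⟩ := h
  induction w with
  | nil => rfl
  | cons hadj _ ih => exact (hf hadj).trans ih

lemma Reachable.apply_eq_of_adj {f : V → β} (hf : ∀ ⦃x y⦄, G.Adj x y → f x = f y)
    (h : G.Reachable u v) : f u = f v :=
  reachable_bot.mp <| h.map_of_adj (G' := ⊥) fun _ _ hxy => reachable_bot.mpr (hf hxy)

lemma Iso.ncard_neighborSet (f : G ≃g G') (v : V) :
    (G'.neighborSet (f v)).ncard = (G.neighborSet v).ncard := by
  rw [← f.image_neighborSet, Set.ncard_image_of_injective _ f.injective]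

end SimpleGraph

section Breed1

variable {V₁ V₂ : Type*} {G₁ : SimpleGraph V₁} {G₂ : SimpleGraph V₂} {a b : V₁} {c d : V₂}

@[simp] lemma breed1_adj_left_left {x y : V₁} :
    (breed1 G₁ G₂ a b c d).Adj (inl (inl x)) (inl (inl y)) ↔ G₁.Adj x y ∧ s(x, y) ≠ s(a, b) := by
  simp [breed1, G₁.adj_comm y]
  grind [Adj.ne]

@[simp] lemma breed1_adj_right_right {x y : V₂} :
    (breed1 G₁ G₂ a b c d).Adj (inl (inr x)) (inl (inr y)) ↔ G₂.Adj x y ∧ s(x, y) ≠ s(c, d) := by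
  simp [breed1, G₂.adj_comm y]
  grind [Adj.ne]

@[simp] lemma breed1_not_adj_left_right {x : V₁} {y : V₂} :
    ¬ (breed1 G₁ G₂ a b c d).Adj (inl (inl x)) (inl (inr y)) := by
  simp [breed1]

@[simp] lemma breed1_adj_left_new {x : V₁} {i : Fin 2} :
    (breed1 G₁ G₂ a b c d).Adj (inl (inl x)) (inr i) ↔ i = 0 ∧ (x = a ∨ x = b) := by
  simp [breed1]
  grind

@[simp] lemma breed1_adj_right_new {y : V₂} {i : Fin 2} :
    (breed1 G₁ G₂ a b c d).Adj (inl (inr y)) (inr i) ↔ i = 1 ∧ (y = c ∨ y = d) := by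
  simp [breed1]
  grind

@[simp] lemma breed1_adj_new_new {i j : Fin 2} :
    (breed1 G₁ G₂ a b c d).Adj (inr i) (inr j) ↔ i ≠ j := by
  simp [breed1]
  omega

variable (G₁ G₂ a b c d) in
def breed1Comm : breed1 G₁ G₂ a b c d ≃g breed1 G₂ G₁ c d a b where
  toEquiv := Equiv.sumCongr (Equiv.sumComm V₁ V₂) (Equiv.swap 0 1)
  map_rel_iff' {p q} := by
    rcases p with (x | x) | i <;> rcases q with (y | y) | j <;>
      (try fin_cases i) <;> (try fin_cases j)
    all_goals simp [adj_comm _ (inr _) (inl _), adj_comm _ (inl (inr _)) (inl (inl _))]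

lemma breed1_reachable_left {x y : V₁} (h : G₁.Reachable x y) :
    (breed1 G₁ G₂ a b c d).Reachable (inl (inl x)) (inl (inl y)) := by
  refine h.map_of_adj (f := fun x => inl (inl x)) fun x y hxy => ?_
  by_cases hdel : s(x, y) = s(a, b)
  · have hx : x = a ∨ x = b := Sym2.mem_iff.mp (hdel ▸ Sym2.mem_mk_left x y)
    have hy : y = a ∨ y = b := Sym2.mem_iff.mp (hdel ▸ Sym2.mem_mk_right x y)
    exact (Adj.reachable (v := inr 0) (by simpa)).trans (Adj.reachable (by simpa [adj_comm]))
  · exact (breed1_adj_left_left.mpr ⟨hxy, hdel⟩).reachable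

lemma breed1_reachable_left_new (h₁ : G₁.Connected) (x : V₁) :
    (breed1 G₁ G₂ a b c d).Reachable (inl (inl x)) (inr 0) :=
  (breed1_reachable_left (h₁.preconnected x a)).trans (Adj.reachable (by simp))

lemma breed1_connected (h₁ : G₁.Connected) (h₂ : G₂.Connected) :
    (breed1 G₁ G₂ a b c d).Connected := by
  have hnew : (breed1 G₁ G₂ a b c d).Reachable (inr 1) (inr 0) := Adj.reachable (by simp)
  have hright (y : V₂) : (breed1 G₁ G₂ a b c d).Reachable (inl (inr y)) (inr 0) :=
    ((breed1_reachable_left_new h₂ y).map (breed1Comm G₁ G₂ a b c d).symm.toHom).trans hnew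
  have hall : ∀ p, (breed1 G₁ G₂ a b c d).Reachable p (inr 0) := by
    rintro ((x | y) | i)
    · exact breed1_reachable_left_new h₁ x
    · exact hright y
    · fin_cases i
      exacts [.rfl, hnew]
  exact (connected_iff _).mpr ⟨fun p q => (hall p).trans (hall q).symm, ⟨inr 0⟩⟩

lemma breed1_isBridge : (breed1 G₁ G₂ a b c d).IsBridge s(inr 0, inr 1) := by
  let side : (V₁ ⊕ V₂) ⊕ Fin 2 → Bool := Sum.elim Sum.isRight (· = 1)
  have hside : ∀ ⦃p q⦄, ((breed1 G₁ G₂ a b c d).deleteEdges {s(inr 0, inr 1)}).Adj p q →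
      side p = side q := by
    rintro ((x | x) | i) ((y | y) | j) hpq <;> (try fin_cases i) <;> (try fin_cases j) <;>
      simp_all [side, adj_comm _ (inr _) (inl _), adj_comm _ (inl (inr _)) (inl (inl _))]
  rw [isBridge_iff]
  exact fun h => absurd (h.apply_eq_of_adj hside) (by simp [side])

open scoped Classical in
lemma breed1_neighborSet_left (hab : G₁.Adj a b) (x : V₁) :
    (breed1 G₁ G₂ a b c d).neighborSet (inl (inl x)) =
      (fun y => if s(x, y) = s(a, b) then inr 0 else inl (inl y)) '' G₁.neighborSet x := by
  ext ((y | y) | i)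
  · simp [ite_eq_iff]
  · simp [ite_eq_iff]
  · simp only [mem_neighborSet, breed1_adj_left_new, Set.mem_image, ite_eq_iff, inr.injEq,
      reduceCtorEq, and_false, or_false]
    constructor
    · rintro ⟨rfl, rfl | rfl⟩
      exacts [⟨b, hab, rfl, rfl⟩, ⟨a, hab.symm, Sym2.eq_swap, rfl⟩]
    · rintro ⟨y, -, hxy, rfl⟩
      exact ⟨rfl, Sym2.mem_iff.mp (hxy ▸ Sym2.mem_mk_left x y)⟩

lemma breed1_ncard_neighborSet_left (hab : G₁.Adj a b) (x : V₁) :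
    ((breed1 G₁ G₂ a b c d).neighborSet (inl (inl x))).ncard = (G₁.neighborSet x).ncard := by
  rw [breed1_neighborSet_left hab, Set.ncard_image_of_injective _ ?_]
  intro y z hyz
  dsimp only at hyz
  split_ifs at hyz with hy hz hz
  · exact Sym2.congr_right.mp (hy.trans hz.symm)
  all_goals simp_all

lemma breed1_neighborSet_new_zero :
    (breed1 G₁ G₂ a b c d).neighborSet (inr 0) = {inl (inl a), inl (inl b), inr 1} := by
  ext ((x | y) | i)
  · simp [adj_comm _ (inr _) (inl _), eq_comm]
  · simp [adj_comm _ (inr _) (inl _)]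
  · fin_cases i <;> simp

lemma breed1_ncard_neighborSet_new_zero (hab : a ≠ b) :
    ((breed1 G₁ G₂ a b c d).neighborSet (inr 0)).ncard = 3 := by
  rw [breed1_neighborSet_new_zero, Set.ncard_eq_three]
  exact ⟨_, _, _, by simpa, by simp, by simp, rfl⟩

lemma breed1_isCubic (hc₁ : IsCubic G₁) (hc₂ : IsCubic G₂) (hab : G₁.Adj a b)
    (hcd : G₂.Adj c d) : IsCubic (breed1 G₁ G₂ a b c d) := by
  have hswap (p) := (breed1Comm G₁ G₂ a b c d).symm.ncard_neighborSet p
  rintro ((x | y) | i)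
  · exact (breed1_ncard_neighborSet_left hab x).trans (hc₁ x)
  · exact (hswap (inl (inl y))).trans ((breed1_ncard_neighborSet_left hcd y).trans (hc₂ y))
  · fin_cases i
    · exact breed1_ncard_neighborSet_new_zero hab.ne
    · exact (hswap (inr 0)).trans (breed1_ncard_neighborSet_new_zero hcd.ne)

end Breed1

/-- the result of a type 1 breeding operation on connected cubic graphs
is a connected cubic graph in which the new edge (v₁,v₂) is a bridge. -/
theorem breed1_spec {V₁ V₂ : Type*} (G₁ : SimpleGraph V₁) (G₂ : SimpleGraph V₂)
    (h₁ : G₁.Connected) (h₂ : G₂.Connected) (hc₁ : IsCubic G₁) (hc₂ : IsCubic G₂)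
    (a b : V₁) (hab : G₁.Adj a b) (c d : V₂) (hcd : G₂.Adj c d) :
    (breed1 G₁ G₂ a b c d).Connected ∧ IsCubic (breed1 G₁ G₂ a b c d) ∧
      (breed1 G₁ G₂ a b c d).IsBridge s(Sum.inr 0, Sum.inr 1) :=
  ⟨breed1_connected h₁ h₂, breed1_isCubic hc₁ hc₂ hab hcd, breed1_isBridge⟩
end

section
/- Let Γ1 = (V1, E1) and Γ2 = (V2, E2) be vertex-disjoint connected cubic graphs, let e1 = (a,b) ∈ E1 be an edge that is not a bridge of Γ1, and let e2 = (c,d) ∈ E2 be an edge that is not a bridge of Γ2. Let ΓD be the graph with vertex set V1 ∪ V2 and edge set (E1 \ {e1}) ∪ (E2 \ {e2}) ∪ {(a,c), (b,d)}. Then ΓD is a connected cubic graph and {(a,c), (b,d)} is a 2-cracker of ΓD. -/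
/-! The bred graph is the disjoint sum of `G₁ - ab` and `G₂ - cd` together with the two cross
edges `ac` and `bd`. Removing a non-bridge keeps each side connected, so either cross edge alone
connects the two sides, whereas removing both cross edges leaves a disjoint sum, which is
disconnected. Degrees are preserved because `a`, `b`, `c`, `d` each trade their deleted edge for
a cross edge; the symmetries `a ↔ b, c ↔ d` and `G₁ ↔ G₂` reduce the degree count to two cases. -/

open SimpleGraph

/-- The type 2 breeding operation: delete edges (a,b) of Γ₁ and (c,d) of Γ₂ and add
the edges (a,c) and (b,d). -/
def breed2 {V₁ V₂ : Type*} (G₁ : SimpleGraph V₁) (G₂ : SimpleGraph V₂)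
    (a b : V₁) (c d : V₂) : SimpleGraph (V₁ ⊕ V₂) :=
  SimpleGraph.fromRel (fun p q =>
    (∃ x y : V₁, p = Sum.inl x ∧ q = Sum.inl y ∧ G₁.Adj x y ∧ s(x, y) ≠ s(a, b)) ∨
    (∃ x y : V₂, p = Sum.inr x ∧ q = Sum.inr y ∧ G₂.Adj x y ∧ s(x, y) ≠ s(c, d)) ∨
    (p = Sum.inl a ∧ q = Sum.inr c) ∨
    (p = Sum.inl b ∧ q = Sum.inr d))

section

open Sum

variable {V₁ V₂ : Type*} {G₁ : SimpleGraph V₁} {G₂ : SimpleGraph V₂} {a b : V₁} {c d : V₂}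

theorem breed2_eq_sum_sup_fromEdgeSet :
    breed2 G₁ G₂ a b c d = (G₁.deleteEdges {s(a, b)} ⊕g G₂.deleteEdges {s(c, d)}) ⊔
      fromEdgeSet {s(inl a, inr c), s(inl b, inr d)} := by
  ext (x | x) (y | y) <;> simp [breed2] <;> grind [Adj.ne, Adj.symm]

theorem breed2_swap_ends : breed2 G₁ G₂ b a d c = breed2 G₁ G₂ a b c d := by
  simp only [breed2_eq_sum_sup_fromEdgeSet, Sym2.eq_swap (a := b), Sym2.eq_swap (a := d),
    Set.pair_comm]

def breed2Comm : breed2 G₂ G₁ c d a b ≃g breed2 G₁ G₂ a b c d where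
  toEquiv := Equiv.sumComm V₂ V₁
  map_rel_iff' {x y} := by
    rcases x with x | x <;> rcases y with y | y <;> simp [breed2_eq_sum_sup_fromEdgeSet]

theorem breed2_neighborSet_inl_of_ne {x : V₁} (hxa : x ≠ a) (hxb : x ≠ b) :
    (breed2 G₁ G₂ a b c d).neighborSet (inl x) = inl '' G₁.neighborSet x := by
  ext (y | y) <;> simp [breed2_eq_sum_sup_fromEdgeSet, hxa, hxb]

theorem breed2_neighborSet_inl_left (hab : a ≠ b) :
    (breed2 G₁ G₂ a b c d).neighborSet (inl a) =
      insert (inr c) (inl '' (G₁.neighborSet a \ {b})) := by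
  ext (y | y) <;> simp [breed2_eq_sum_sup_fromEdgeSet, hab, and_comm]

theorem breed2_ncard_neighborSet_inl_left (hc₁ : IsCubic G₁) (hab : G₁.Adj a b) :
    ((breed2 G₁ G₂ a b c d).neighborSet (inl a)).ncard = 3 := by
  have hfin : (G₁.neighborSet a).Finite := Set.finite_of_ncard_ne_zero (by simp [hc₁ a])
  rw [breed2_neighborSet_inl_left hab.ne,
    Set.ncard_insert_of_notMem (by simp) (hfin.sdiff.image _),
    Set.ncard_image_of_injective _ inl_injective,
    Set.ncard_sdiff_singleton_of_mem (show b ∈ G₁.neighborSet a from hab), hc₁]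

theorem breed2_ncard_neighborSet_inl (hc₁ : IsCubic G₁) (hab : G₁.Adj a b) (x : V₁) :
    ((breed2 G₁ G₂ a b c d).neighborSet (inl x)).ncard = 3 := by
  by_cases hxa : x = a
  · subst hxa
    exact breed2_ncard_neighborSet_inl_left hc₁ hab
  by_cases hxb : x = b
  · subst hxb
    rw [← breed2_swap_ends]
    exact breed2_ncard_neighborSet_inl_left hc₁ hab.symm
  rw [breed2_neighborSet_inl_of_ne hxa hxb, Set.ncard_image_of_injective _ inl_injective, hc₁]

theorem breed2_isCubic (hc₁ : IsCubic G₁) (hc₂ : IsCubic G₂) (hab : G₁.Adj a b)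
    (hcd : G₂.Adj c d) : IsCubic (breed2 G₁ G₂ a b c d) := by
  rintro (x | y)
  · exact breed2_ncard_neighborSet_inl hc₁ hab x
  · rw [show inr y = breed2Comm (inl y) from rfl, ← Iso.image_neighborSet,
      Set.ncard_image_of_injective _ breed2Comm.injective]
    exact breed2_ncard_neighborSet_inl hc₂ hcd y

theorem breed2_deleteEdges_of_subset {S : Set (Sym2 (V₁ ⊕ V₂))}
    (hS : S ⊆ {s(inl a, inr c), s(inl b, inr d)}) :
    (breed2 G₁ G₂ a b c d).deleteEdges S =
      (G₁.deleteEdges {s(a, b)} ⊕g G₂.deleteEdges {s(c, d)}) ⊔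
        fromEdgeSet ({s(inl a, inr c), s(inl b, inr d)} \ S) := by
  rw [breed2_eq_sum_sup_fromEdgeSet, deleteEdges_sup, deleteEdges_fromEdgeSet,
    deleteEdges_eq_self.mpr (Set.disjoint_right.mpr fun e he => ?_)]
  rcases hS he with rfl | rfl <;> simp

theorem not_connected_breed2_deleteEdges :
    ¬((breed2 G₁ G₂ a b c d).deleteEdges {s(inl a, inr c), s(inl b, inr d)}).Connected := by
  have : Nonempty V₁ := ⟨a⟩
  have : Nonempty V₂ := ⟨c⟩
  rw [breed2_deleteEdges_of_subset subset_rfl, Set.sdiff_self, fromEdgeSet_empty, sup_bot_eq]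
  exact not_connected_sum

theorem connected_breed2_deleteEdges (h₁ : (G₁.deleteEdges {s(a, b)}).Connected)
    (h₂ : (G₂.deleteEdges {s(c, d)}).Connected) {S : Set (Sym2 (V₁ ⊕ V₂))}
    (hS : S ⊂ {s(inl a, inr c), s(inl b, inr d)}) :
    ((breed2 G₁ G₂ a b c d).deleteEdges S).Connected := by
  obtain ⟨e, heC, heS⟩ := Set.exists_of_ssubset hS
  rw [breed2_deleteEdges_of_subset hS.subset]
  have hle {u : V₁} {v : V₂}
      (huv : s(inl u, inr v) ∈ ({s(inl a, inr c), s(inl b, inr d)} \ S)) :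
      edge (inl u) (inr v) ≤ fromEdgeSet ({s(inl a, inr c), s(inl b, inr d)} \ S) :=
    fromEdgeSet_mono (Set.singleton_subset_iff.mpr huv)
  rcases heC with rfl | rfl
  · exact (h₁.sum_sup_edge h₂).mono (sup_le_sup_left (hle ⟨by simp, heS⟩) _)
  · exact (h₁.sum_sup_edge h₂).mono (sup_le_sup_left (hle ⟨by simp, heS⟩) _)

end

/-- the result of a type 2 breeding operation on connected cubic graphs
along non-bridge edges is a connected cubic graph in which the two new edges form a
2-cracker. -/
theorem breed2_spec {V₁ V₂ : Type*} (G₁ : SimpleGraph V₁) (G₂ : SimpleGraph V₂)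
    (h₁ : G₁.Connected) (h₂ : G₂.Connected) (hc₁ : IsCubic G₁) (hc₂ : IsCubic G₂)
    (a b : V₁) (hab : G₁.Adj a b) (hnb₁ : ¬ G₁.IsBridge s(a, b))
    (c d : V₂) (hcd : G₂.Adj c d) (hnb₂ : ¬ G₂.IsBridge s(c, d)) :
    (breed2 G₁ G₂ a b c d).Connected ∧ IsCubic (breed2 G₁ G₂ a b c d) ∧
      IsKCracker (breed2 G₁ G₂ a b c d)
        {s(Sum.inl a, Sum.inr c), s(Sum.inl b, Sum.inr d)} 2 := by
  have h₁' := h₁.connected_delete_edge_of_not_isBridge hnb₁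
  have h₂' := h₂.connected_delete_edge_of_not_isBridge hnb₂
  have hne : s(Sum.inl a, Sum.inr c) ≠ (s(Sum.inl b, Sum.inr d) : Sym2 (V₁ ⊕ V₂)) := by
    simp [hab.ne]
  refine ⟨?_, breed2_isCubic hc₁ hc₂ hab hcd,
    ⟨⟨by simp, ?_, ?_, not_connected_breed2_deleteEdges,
      fun S hS => connected_breed2_deleteEdges h₁' h₂' hS⟩, Set.ncard_pair hne⟩⟩
  · simpa [deleteEdges_empty] using
      connected_breed2_deleteEdges (S := ∅) h₁' h₂' (Set.empty_ssubset.mpr (by simp))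
  · rintro e (rfl | rfl) <;> simp [breed2_eq_sum_sup_fromEdgeSet]
  · simp [Set.pairwise_pair, hab.ne, hab.ne', hcd.ne, hcd.ne']
end

section
/- Let Γ1 = (V1, E1) be a connected cubic graph with a bridge e1 = (a,b), and let v1, v2, v3, v4 be four new vertices. Let ΓD be the graph with vertex set V1 ∪ {v1, v2, v3, v4} and edge set (E1 \ {e1}) ∪ {(a,v1), (v1,v2), (v1,v3), (v2,v3), (v2,v4), (v3,v4), (v4,b)}. Then ΓD is a connected cubic graph, and each of the edges (a,v1) and (v4,b) is a bridge of ΓD. -/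
open SimpleGraph

/-- The type 1 parthenogenic operation: delete the bridge (a,b) and insert a
parthenogenic diamond on four new vertices v₁, v₂, v₃, v₄ (here Fin 4) with edges
(a,v₁), (v₁,v₂), (v₁,v₃), (v₂,v₃), (v₂,v₄), (v₃,v₄), (v₄,b). -/
def parth1 {V₁ : Type*} (G₁ : SimpleGraph V₁) (a b : V₁) : SimpleGraph (V₁ ⊕ Fin 4) :=
  SimpleGraph.fromRel (fun p q =>
    (∃ x y : V₁, p = Sum.inl x ∧ q = Sum.inl y ∧ G₁.Adj x y ∧ s(x, y) ≠ s(a, b)) ∨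
    (p = Sum.inl a ∧ q = Sum.inr 0) ∨
    (p = Sum.inr 0 ∧ q = Sum.inr 1) ∨
    (p = Sum.inr 0 ∧ q = Sum.inr 2) ∨
    (p = Sum.inr 1 ∧ q = Sum.inr 2) ∨
    (p = Sum.inr 1 ∧ q = Sum.inr 3) ∨
    (p = Sum.inr 2 ∧ q = Sum.inr 3) ∨
    (p = Sum.inr 3 ∧ q = Sum.inl b))

/-!
Every edge of `G₁` other than `ab` survives, and `ab` is replaced by the path
`a v₁ v₂ v₄ b`, so connectivity is kept. Degrees are kept too: `a` trades `b` for `v₁`,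
`b` trades `a` for `v₄`, and the diamond is `K₄` minus `v₁v₄`. For the bridges, collapse the
diamond onto `b` (resp. `a`): every other edge of the new graph goes to an edge of `G₁ - ab`
or to a single vertex, so a walk avoiding `(a, v₁)` (resp. `(v₄, b)`) would project to an
`a`–`b` walk in `G₁ - ab`.
-/

open Sum

theorem SimpleGraph.Reachable.lift {V W : Type*} {G : SimpleGraph V} {H : SimpleGraph W}
    (f : V → W) (hf : ∀ u v, G.Adj u v → H.Reachable (f u) (f v)) {u v : V}
    (h : G.Reachable u v) : H.Reachable (f u) (f v) := by
  rw [reachable_iff_reflTransGen] at h ⊢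
  exact Relation.ReflTransGen.lift' f
    (fun x y hxy => (reachable_iff_reflTransGen _ _).1 (hf x y hxy)) _ _ h

theorem Set.ncard_insert_image_sdiff_singleton {α β : Type*} {s : Set α} {f : α → β} {c : β}
    {y : α} (hs : s.Finite) (hf : Function.Injective f) (hc : c ∉ Set.range f) (hy : y ∈ s) :
    (insert c (f '' (s \ {y}))).ncard = s.ncard := by
  rw [Set.ncard_insert_of_notMem (fun h => hc (Set.image_subset_range _ _ h)) (hs.sdiff.image f),
    Set.ncard_image_of_injective _ hf, Set.ncard_sdiff_singleton_add_one hy hs]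

section Parth1

variable {V : Type*} {G : SimpleGraph V} {a b x y : V} {i j : Fin 4}

@[simp] lemma parth1_adj_inl_inl :
    (parth1 G a b).Adj (inl x) (inl y) ↔ G.Adj x y ∧ s(x, y) ≠ s(a, b) := by
  simp only [parth1, fromRel_adj]
  simp [-Sym2.eq, Sym2.eq_swap (a := y), G.adj_comm y x]
  exact fun h _ => h.ne

@[simp] lemma parth1_adj_inl_inr :
    (parth1 G a b).Adj (inl x) (inr i) ↔ x = a ∧ i = 0 ∨ x = b ∧ i = 3 := by
  simp [parth1, fromRel_adj]
  tauto

@[simp] lemma parth1_adj_inr_inl :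
    (parth1 G a b).Adj (inr i) (inl x) ↔ x = a ∧ i = 0 ∨ x = b ∧ i = 3 := by
  rw [adj_comm, parth1_adj_inl_inr]

@[simp] lemma parth1_adj_inr_inr :
    (parth1 G a b).Adj (inr i) (inr j) ↔ i ≠ j ∧ s(i, j) ≠ s(0, 3) := by
  simp only [parth1, fromRel_adj]
  fin_cases i <;> fin_cases j <;> simp

lemma parth1_neighborSet_inl_of_ne (ha : x ≠ a) (hb : x ≠ b) :
    (parth1 G a b).neighborSet (inl x) = inl '' G.neighborSet x := by
  ext (y | i) <;> simp [ha, hb]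

lemma parth1_neighborSet_inl_left (hab : a ≠ b) :
    (parth1 G a b).neighborSet (inl a) = insert (inr 0) (inl '' (G.neighborSet a \ {b})) := by
  ext (y | i) <;> simp [hab]

lemma parth1_neighborSet_inl_right (hab : a ≠ b) :
    (parth1 G a b).neighborSet (inl b) = insert (inr 3) (inl '' (G.neighborSet b \ {a})) := by
  ext (y | i) <;> simp [hab.symm]

lemma parth1_ncard_neighborSet_inr (i : Fin 4) :
    ((parth1 G a b).neighborSet (inr i)).ncard = 3 := by
  rw [Set.ncard_eq_three]
  fin_cases i
  · exact ⟨inl a, inr 1, inr 2, by simp, by simp, by simp, by ext (y | j) <;> simp; omega⟩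
  · exact ⟨inr 0, inr 2, inr 3, by simp, by simp, by simp, by ext (y | j) <;> simp; omega⟩
  · exact ⟨inr 0, inr 1, inr 3, by simp, by simp, by simp, by ext (y | j) <;> simp; omega⟩
  · exact ⟨inr 1, inr 2, inl b, by simp, by simp, by simp, by ext (y | j) <;> simp; omega⟩

lemma parth1_isCubic (hG : IsCubic G) (hab : G.Adj a b) : IsCubic (parth1 G a b) := by
  rintro (x | i)
  · have hfin : (G.neighborSet x).Finite := Set.finite_of_ncard_ne_zero (by simp [hG x])
    by_cases hxa : x = a
    · subst hxa
      rw [parth1_neighborSet_inl_left hab.ne,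
        Set.ncard_insert_image_sdiff_singleton hfin inl_injective (by simp) hab, hG]
    by_cases hxb : x = b
    · subst hxb
      rw [parth1_neighborSet_inl_right hab.ne,
        Set.ncard_insert_image_sdiff_singleton hfin inl_injective (by simp) hab.symm, hG]
    rw [parth1_neighborSet_inl_of_ne hxa hxb, Set.ncard_image_of_injective _ inl_injective, hG]
  · exact parth1_ncard_neighborSet_inr i

lemma parth1_reachable_inl_left_inr (i : Fin 4) :
    (parth1 G a b).Reachable (inl a) (inr i) := by
  have h0 : (parth1 G a b).Reachable (inl a) (inr 0) := Adj.reachable (by simp)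
  have h01 : (parth1 G a b).Reachable (inr 0) (inr 1) := Adj.reachable (by simp)
  fin_cases i
  · exact h0
  · exact h0.trans h01
  · exact h0.trans (Adj.reachable (by simp))
  · exact (h0.trans h01).trans (Adj.reachable (by simp))

lemma parth1_reachable_inl_inl (h : G.Reachable x y) :
    (parth1 G a b).Reachable (inl x) (inl y) := by
  have hab : (parth1 G a b).Reachable (inl a) (inl b) :=
    (parth1_reachable_inl_left_inr 3).trans (Adj.reachable (by simp))
  refine h.lift inl fun u v huv => ?_
  by_cases he : s(u, v) = s(a, b)
  · rcases Sym2.eq_iff.1 he with ⟨rfl, rfl⟩ | ⟨rfl, rfl⟩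
    · exact hab
    · exact hab.symm
  · exact Adj.reachable (parth1_adj_inl_inl.2 ⟨huv, he⟩)

lemma parth1_connected (hG : G.Connected) : (parth1 G a b).Connected := by
  have h : ∀ p, (parth1 G a b).Reachable (inl a) p := by
    rintro (x | i)
    · exact parth1_reachable_inl_inl (hG.preconnected a x)
    · exact parth1_reachable_inl_left_inr i
  exact (connected_iff _).2 ⟨fun p q => (h p).symm.trans (h q), ⟨inl a⟩⟩

lemma parth1_isBridge_inl_inr (h : G.IsBridge s(a, b)) :
    (parth1 G a b).IsBridge s(inl a, inr 0) := by
  rw [isBridge_iff] at h ⊢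
  intro hr
  refine h (hr.lift (Sum.elim id fun _ => b) ?_)
  rintro (x | i) (y | j) hxy <;> obtain ⟨hxy, hne⟩ := deleteEdges_adj.1 hxy
  · obtain ⟨hG, hxy⟩ := parth1_adj_inl_inl.1 hxy
    exact (deleteEdges_adj.2 ⟨hG, hxy⟩).reachable
  · rcases parth1_adj_inl_inr.1 hxy with ⟨rfl, rfl⟩ | ⟨rfl, -⟩
    · exact absurd rfl hne
    · rfl
  · rcases parth1_adj_inr_inl.1 hxy with ⟨rfl, rfl⟩ | ⟨rfl, -⟩
    · exact absurd Sym2.eq_swap hne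
    · rfl
  · rfl

lemma parth1_isBridge_inr_inl (h : G.IsBridge s(a, b)) :
    (parth1 G a b).IsBridge s(inr 3, inl b) := by
  rw [isBridge_iff] at h ⊢
  intro hr
  refine h (hr.lift (Sum.elim id fun _ => a) ?_)
  rintro (x | i) (y | j) hxy <;> obtain ⟨hxy, hne⟩ := deleteEdges_adj.1 hxy
  · obtain ⟨hG, hxy⟩ := parth1_adj_inl_inl.1 hxy
    exact (deleteEdges_adj.2 ⟨hG, hxy⟩).reachable
  · rcases parth1_adj_inl_inr.1 hxy with ⟨rfl, -⟩ | ⟨rfl, rfl⟩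
    · rfl
    · exact absurd Sym2.eq_swap hne
  · rcases parth1_adj_inr_inl.1 hxy with ⟨rfl, -⟩ | ⟨rfl, rfl⟩
    · rfl
    · exact absurd rfl hne
  · rfl

end Parth1

/-- inserting a parthenogenic diamond into a bridge of a connected cubic
graph yields a connected cubic graph in which (a,v₁) and (v₄,b) are bridges. -/
theorem parth1_spec {V₁ : Type*} (G₁ : SimpleGraph V₁)
    (h₁ : G₁.Connected) (hc₁ : IsCubic G₁)
    (a b : V₁) (hbr : G₁.IsBridge s(a, b)) :
    (parth1 G₁ a b).Connected ∧ IsCubic (parth1 G₁ a b) ∧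
      (parth1 G₁ a b).IsBridge s(Sum.inl a, Sum.inr 0) ∧
      (parth1 G₁ a b).IsBridge s(Sum.inr 3, Sum.inl b) :=
  ⟨parth1_connected h₁, parth1_isCubic hc₁ (hbr.reachable_iff_adj.1 (h₁.preconnected a b)),
    parth1_isBridge_inl_inr hbr, parth1_isBridge_inr_inl hbr⟩
end

section
/- Let ΓD be a connected cubic graph with a bridge (v1,v2), where the other two neighbours of v1 are a and b and the other two neighbours of v2 are c and d. Suppose (a,b) is not an edge of ΓD and (c,d) is not an edge of ΓD. Then the graph obtained from ΓD by deleting the vertices v1 and v2 (together with their incident edges) and adding the edges (a,b) and (c,d) has exactly two connected components, each of which is a connected cubic graph. -/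
open SimpleGraph

/-- Delete the vertices v₁ and v₂ (with their incident edges) and add the edges
(a,b) and (c,d). -/
def removeBridgePair {V : Type*} (G : SimpleGraph V) (v₁ v₂ a b c d : V) :
    SimpleGraph {x : V // x ≠ v₁ ∧ x ≠ v₂} :=
  SimpleGraph.fromRel (fun p q =>
    G.Adj p.1 q.1 ∨ (p.1 = a ∧ q.1 = b) ∨ (p.1 = c ∧ q.1 = d))

/-! Every vertex other than `v₁, v₂` reaches `v₁` in `G`; the last vertex of such a walk before
it first meets `{v₁, v₂}` is one of `a, b, c, d`, so in the new graph every vertex reaches `a`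
or `c`. Conversely, replacing the new edges `ab` and `cd` by the paths `a v₁ b` and `c v₂ d`
turns a walk from `a` to `c` in the new graph into a walk from `v₁` to `v₂` avoiding the bridge.
As for degrees, each of `a, b, c, d` trades exactly one old neighbour (`v₁` or `v₂`) for one new
neighbour it was not adjacent to before, and every other vertex keeps its neighbourhood. -/

namespace SimpleGraph

variable {V W : Type*} {G : SimpleGraph V}

theorem Reachable.map_of_forall_adj {G' : SimpleGraph W} (f : V → W)
    (hf : ∀ ⦃x y⦄, G.Adj x y → G'.Reachable (f x) (f y)) {x y : V} (h : G.Reachable x y) :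
    G'.Reachable (f x) (f y) := by
  rw [reachable_iff_reflTransGen] at h ⊢
  exact h.lift' f fun _ _ h => (reachable_iff_reflTransGen _ _).1 (hf h)

theorem Walk.exists_adj_notMem_reachable_induce {S : Set V} {x y : V} (p : G.Walk x y)
    (hx : x ∈ S) (hy : y ∉ S) :
    ∃ z, ∃ hz : z ∈ S, ∃ w ∉ S, G.Adj z w ∧ (G.induce S).Reachable ⟨x, hx⟩ ⟨z, hz⟩ := by
  induction p with
  | nil => exact absurd hx hy
  | @cons x u y hxu p ih =>
    by_cases hu : u ∈ S
    · obtain ⟨z, hz, w, hw, hzw, hreach⟩ := ih hu hy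
      exact ⟨z, hz, w, hw, hzw, (induce_adj.2 hxu).reachable.trans hreach⟩
    · exact ⟨x, hx, u, hu, hxu, .refl _⟩

theorem adj_iff_of_ncard_neighborSet_eq_three {v x y z : V} (h3 : (G.neighborSet v).ncard = 3)
    (hx : G.Adj v x) (hy : G.Adj v y) (hz : G.Adj v z) (hxy : x ≠ y) (hxz : x ≠ z)
    (hyz : y ≠ z) {w : V} : G.Adj v w ↔ w = x ∨ w = y ∨ w = z := by
  have hN : G.neighborSet v = {x, y, z} :=
    (Set.eq_of_subset_of_ncard_le (by rintro _ (rfl | rfl | rfl) <;> assumption)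
      (by rw [h3, Set.ncard_eq_three.2 ⟨x, y, z, hxy, hxz, hyz, rfl⟩])
      (Set.finite_of_ncard_pos (by omega))).symm
  rw [← mem_neighborSet, hN]
  simp

theorem deleteEdges_adj_of_ne {u v x y : V} (h : G.Adj x y) (hy : y ≠ u ∧ y ≠ v) :
    (G.deleteEdges {s(u, v)}).Adj x y := by
  simp [h, hy.1, hy.2]

theorem IsBridge.not_reachable_deleteEdges_of_adj {u v x y : V} (hb : G.IsBridge s(u, v))
    (hx : G.Adj u x) (hxv : x ≠ v) (hy : G.Adj v y) (hyu : y ≠ u) :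
    ¬ (G.deleteEdges {s(u, v)}).Reachable x y := by
  intro hxy
  have hux := deleteEdges_adj_of_ne hx ⟨hx.ne', hxv⟩
  have hvy := deleteEdges_adj_of_ne hy ⟨hyu, hy.ne'⟩
  exact isBridge_iff.1 hb (hux.reachable.trans (hxy.trans hvy.reachable.symm))

theorem IsBridge.ne_of_adj {u v x y : V} (hb : G.IsBridge s(u, v))
    (hx : G.Adj u x) (hxv : x ≠ v) (hy : G.Adj v y) (hyu : y ≠ u) : x ≠ y := by
  rintro rfl
  exact hb.not_reachable_deleteEdges_of_adj hx hxv hy hyu (.refl x)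

end SimpleGraph

theorem IsCubic.finite_neighborSet {V : Type*} {G : SimpleGraph V} (hcub : IsCubic G) (v : V) :
    (G.neighborSet v).Finite :=
  Set.finite_of_ncard_pos (by rw [hcub v]; norm_num)

theorem Set.ncard_diff_pair_of_mem_of_notMem {α : Type*} {s : Set α} {u w : α}
    (hu : u ∈ s) (hw : w ∉ s) : (s \ {u, w}).ncard = s.ncard - 1 := by
  rw [Set.insert_eq, ← Set.sdiff_sdiff, Set.sdiff_singleton_eq_self (fun h => hw h.1),
    Set.ncard_sdiff_singleton_of_mem hu]

section removeBridgePair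

variable {V : Type*} {G : SimpleGraph V} {v₁ v₂ a b c d : V}

theorem removeBridgePair_adj (hab : a ≠ b) (hcd : c ≠ d) {x y : {x : V // x ≠ v₁ ∧ x ≠ v₂}} :
    (removeBridgePair G v₁ v₂ a b c d).Adj x y ↔
      G.Adj x y ∨ s(x.1, y.1) = s(a, b) ∨ s(x.1, y.1) = s(c, d) := by
  simp only [removeBridgePair, fromRel_adj, Sym2.eq_iff, ne_eq, Subtype.ext_iff]
  grind [G.adj_symm, SimpleGraph.irrefl]

theorem removeBridgePair_comm :
    removeBridgePair G v₁ v₂ a b c d = removeBridgePair G v₁ v₂ b a c d := by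
  ext x y
  simp only [removeBridgePair, fromRel_adj]
  grind [G.adj_symm]

theorem removeBridgePair_swap :
    removeBridgePair G v₁ v₂ a b c d = removeBridgePair G v₁ v₂ c d a b := by
  ext x y
  simp only [removeBridgePair, fromRel_adj]
  grind [G.adj_symm]

theorem image_val_neighborSet_removeBridgePair_of_eq (hab : a ≠ b) (hcd : c ≠ d) (hac : a ≠ c)
    (had : a ≠ d) (hb : b ≠ v₁ ∧ b ≠ v₂) {x : {x : V // x ≠ v₁ ∧ x ≠ v₂}} (hx : x.1 = a) :
    Subtype.val '' (removeBridgePair G v₁ v₂ a b c d).neighborSet x =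
      insert b (G.neighborSet a \ {v₁, v₂}) := by
  ext y
  simp only [Set.mem_image, mem_neighborSet, removeBridgePair_adj hab hcd, Set.mem_insert_iff,
    Set.mem_sdiff, Set.mem_singleton_iff, Sym2.eq_iff, hx]
  constructor
  · rintro ⟨y, h, rfl⟩
    grind
  · rintro (rfl | ⟨hy, hy12⟩)
    · exact ⟨⟨y, hb⟩, by simp, rfl⟩
    · exact ⟨⟨y, by tauto⟩, Or.inl hy, rfl⟩

theorem image_val_neighborSet_removeBridgePair_of_ne (hab : a ≠ b) (hcd : c ≠ d)
    {x : {x : V // x ≠ v₁ ∧ x ≠ v₂}} (hx : x.1 ≠ a ∧ x.1 ≠ b ∧ x.1 ≠ c ∧ x.1 ≠ d) :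
    Subtype.val '' (removeBridgePair G v₁ v₂ a b c d).neighborSet x =
      G.neighborSet x \ {v₁, v₂} := by
  ext y
  simp only [Set.mem_image, mem_neighborSet, removeBridgePair_adj hab hcd, Set.mem_sdiff,
    Set.mem_insert_iff, Set.mem_singleton_iff, Sym2.eq_iff]
  constructor
  · rintro ⟨y, h, rfl⟩
    grind
  · rintro ⟨hy, hy12⟩
    exact ⟨⟨y, by tauto⟩, Or.inl hy, rfl⟩

theorem ncard_neighborSet_removeBridgePair_of_eq (hab : a ≠ b) (hcd : c ≠ d) (hac : a ≠ c)
    (had : a ≠ d) (hb : b ≠ v₁ ∧ b ≠ v₂) (hnab : ¬ G.Adj a b) (hfin : (G.neighborSet a).Finite)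
    {x : {x : V // x ≠ v₁ ∧ x ≠ v₂}} (hx : x.1 = a) :
    ((removeBridgePair G v₁ v₂ a b c d).neighborSet x).ncard =
      (G.neighborSet a \ {v₁, v₂}).ncard + 1 := by
  rw [← Set.ncard_image_of_injective _ Subtype.val_injective,
    image_val_neighborSet_removeBridgePair_of_eq hab hcd hac had hb hx,
    Set.ncard_insert_of_notMem (fun h => hnab h.1) hfin.sdiff]

theorem removeBridgePair_reachable_or (hG : G.Preconnected)
    (hN₁ : ∀ {w}, G.Adj v₁ w ↔ w = v₂ ∨ w = a ∨ w = b)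
    (hN₂ : ∀ {w}, G.Adj v₂ w ↔ w = v₁ ∨ w = c ∨ w = d) (hab : a ≠ b) (hcd : c ≠ d)
    (ha : a ≠ v₁ ∧ a ≠ v₂) (hb : b ≠ v₁ ∧ b ≠ v₂) (hc : c ≠ v₁ ∧ c ≠ v₂) (hd : d ≠ v₁ ∧ d ≠ v₂)
    (x : {x : V // x ≠ v₁ ∧ x ≠ v₂}) :
    (removeBridgePair G v₁ v₂ a b c d).Reachable x ⟨a, ha⟩ ∨
      (removeBridgePair G v₁ v₂ a b c d).Reachable x ⟨c, hc⟩ := by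
  obtain ⟨z, hz, w, hw, hzw, hxz_induce⟩ :=
    (hG x v₁).some.exists_adj_notMem_reachable_induce (S := {x | x ≠ v₁ ∧ x ≠ v₂}) x.2
      (by simp)
  have hxz : (removeBridgePair G v₁ v₂ a b c d).Reachable x ⟨z, hz⟩ :=
    hxz_induce.mono fun p q h => (removeBridgePair_adj hab hcd).2 (Or.inl h)
  have hab' : (removeBridgePair G v₁ v₂ a b c d).Adj ⟨a, ha⟩ ⟨b, hb⟩ :=
    (removeBridgePair_adj hab hcd).2 (Or.inr (Or.inl rfl))
  have hcd' : (removeBridgePair G v₁ v₂ a b c d).Adj ⟨c, hc⟩ ⟨d, hd⟩ :=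
    (removeBridgePair_adj hab hcd).2 (Or.inr (Or.inr rfl))
  obtain rfl | rfl : w = v₁ ∨ w = v₂ := by simpa [or_iff_not_imp_left] using hw
  · rcases hN₁.1 hzw.symm with rfl | rfl | rfl
    · exact absurd rfl hz.2
    · exact Or.inl hxz
    · exact Or.inl (hxz.trans hab'.symm.reachable)
  · rcases hN₂.1 hzw.symm with rfl | rfl | rfl
    · exact absurd rfl hz.1
    · exact Or.inr hxz
    · exact Or.inr (hxz.trans hcd'.symm.reachable)

theorem removeBridgePair_not_reachable (hbr : G.IsBridge s(v₁, v₂)) (hab : a ≠ b) (hcd : c ≠ d)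
    (h₁a : G.Adj v₁ a) (h₁b : G.Adj v₁ b) (h₂c : G.Adj v₂ c) (h₂d : G.Adj v₂ d)
    (ha : a ≠ v₁ ∧ a ≠ v₂) (hb : b ≠ v₁ ∧ b ≠ v₂) (hc : c ≠ v₁ ∧ c ≠ v₂)
    (hd : d ≠ v₁ ∧ d ≠ v₂) :
    ¬ (removeBridgePair G v₁ v₂ a b c d).Reachable ⟨a, ha⟩ ⟨c, hc⟩ := by
  set G' := G.deleteEdges {s(v₁, v₂)}
  have hab' : G'.Reachable a b :=
    (deleteEdges_adj_of_ne h₁a ha).reachable.symm.trans (deleteEdges_adj_of_ne h₁b hb).reachable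
  have hcd' : G'.Reachable c d :=
    (deleteEdges_adj_of_ne h₂c hc).reachable.symm.trans (deleteEdges_adj_of_ne h₂d hd).reachable
  intro h
  refine hbr.not_reachable_deleteEdges_of_adj h₁a ha.2 h₂c hc.1
    (h.map_of_forall_adj Subtype.val ?_)
  intro x y hxy
  rcases (removeBridgePair_adj hab hcd).1 hxy with h | h | h
  · exact (deleteEdges_adj_of_ne h y.2).reachable
  · rcases Sym2.eq_iff.1 h with ⟨hx, hy⟩ | ⟨hx, hy⟩ <;> rw [hx, hy]
    exacts [hab', hab'.symm]
  · rcases Sym2.eq_iff.1 h with ⟨hx, hy⟩ | ⟨hx, hy⟩ <;> rw [hx, hy]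
    exacts [hcd', hcd'.symm]

theorem isCubic_removeBridgePair (hcub : IsCubic G)
    (hN₁ : ∀ {w}, G.Adj v₁ w ↔ w = v₂ ∨ w = a ∨ w = b)
    (hN₂ : ∀ {w}, G.Adj v₂ w ↔ w = v₁ ∨ w = c ∨ w = d) (hab : a ≠ b) (hcd : c ≠ d)
    (hac : a ≠ c) (had : a ≠ d) (hbc : b ≠ c) (hbd : b ≠ d)
    (ha : a ≠ v₁ ∧ a ≠ v₂) (hb : b ≠ v₁ ∧ b ≠ v₂) (hc : c ≠ v₁ ∧ c ≠ v₂) (hd : d ≠ v₁ ∧ d ≠ v₂)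
    (hnab : ¬ G.Adj a b) (hncd : ¬ G.Adj c d) :
    IsCubic (removeBridgePair G v₁ v₂ a b c d) := by
  have h₁ {w} (hw : w = a ∨ w = b) : (G.neighborSet w \ {v₁, v₂}).ncard = 2 := by
    have hv₁ : v₁ ∈ G.neighborSet w := (hN₁.2 (Or.inr hw)).symm
    have hv₂ : v₂ ∉ G.neighborSet w := by rw [mem_neighborSet, adj_comm, hN₂]; grind
    rw [Set.ncard_diff_pair_of_mem_of_notMem hv₁ hv₂, hcub]
  have h₂ {w} (hw : w = c ∨ w = d) : (G.neighborSet w \ {v₁, v₂}).ncard = 2 := by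
    have hv₁ : v₁ ∉ G.neighborSet w := by rw [mem_neighborSet, adj_comm, hN₁]; grind
    have hv₂ : v₂ ∈ G.neighborSet w := (hN₂.2 (Or.inr hw)).symm
    rw [Set.pair_comm, Set.ncard_diff_pair_of_mem_of_notMem hv₂ hv₁, hcub]
  intro x
  by_cases hxa : x.1 = a
  · rw [ncard_neighborSet_removeBridgePair_of_eq hab hcd hac had hb hnab
      (hcub.finite_neighborSet a) hxa, h₁ (Or.inl rfl)]
  by_cases hxb : x.1 = b
  · rw [removeBridgePair_comm, ncard_neighborSet_removeBridgePair_of_eq hab.symm hcd hbc hbd ha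
      (fun h => hnab h.symm) (hcub.finite_neighborSet b) hxb, h₁ (Or.inr rfl)]
  by_cases hxc : x.1 = c
  · rw [removeBridgePair_swap, ncard_neighborSet_removeBridgePair_of_eq hcd hab hac.symm
      hbc.symm hd hncd (hcub.finite_neighborSet c) hxc, h₂ (Or.inl rfl)]
  by_cases hxd : x.1 = d
  · rw [removeBridgePair_swap, removeBridgePair_comm, ncard_neighborSet_removeBridgePair_of_eq
      hcd.symm hab had.symm hbd.symm hc (fun h => hncd h.symm) (hcub.finite_neighborSet d) hxd,
      h₂ (Or.inr rfl)]
  rw [← Set.ncard_image_of_injective _ Subtype.val_injective,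
    image_val_neighborSet_removeBridgePair_of_ne hab hcd ⟨hxa, hxb, hxc, hxd⟩,
    sdiff_eq_self_iff_disjoint.2 ?_, hcub]
  rw [Set.disjoint_left]
  rintro w (rfl | rfl) hxw <;> grind [mem_neighborSet, adj_comm]

theorem card_connectedComponent_removeBridgePair (hG : G.Preconnected)
    (hbr : G.IsBridge s(v₁, v₂)) (hN₁ : ∀ {w}, G.Adj v₁ w ↔ w = v₂ ∨ w = a ∨ w = b)
    (hN₂ : ∀ {w}, G.Adj v₂ w ↔ w = v₁ ∨ w = c ∨ w = d) (hab : a ≠ b) (hcd : c ≠ d)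
    (ha : a ≠ v₁ ∧ a ≠ v₂) (hb : b ≠ v₁ ∧ b ≠ v₂) (hc : c ≠ v₁ ∧ c ≠ v₂) (hd : d ≠ v₁ ∧ d ≠ v₂) :
    Nat.card (removeBridgePair G v₁ v₂ a b c d).ConnectedComponent = 2 := by
  refine Nat.card_eq_two_iff.2 ⟨connectedComponentMk _ ⟨a, ha⟩, connectedComponentMk _ ⟨c, hc⟩,
    fun h => removeBridgePair_not_reachable hbr hab hcd (hN₁.2 (by simp)) (hN₁.2 (by simp))
      (hN₂.2 (by simp)) (hN₂.2 (by simp)) ha hb hc hd (ConnectedComponent.exact h), ?_⟩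
  refine Set.eq_univ_of_forall fun C => C.ind fun x => ?_
  rcases removeBridgePair_reachable_or hG hN₁ hN₂ hab hcd ha hb hc hd x with h | h
  exacts [Or.inl (ConnectedComponent.sound h), Or.inr (ConnectedComponent.sound h)]

end removeBridgePair

/-- the inverse of a type 1 breeding operation. Deleting the two
endpoints of a bridge (v₁,v₂), whose other neighbours are a,b and c,d respectively,
and adding the edges (a,b), (c,d) yields a graph with exactly two connected
components, each of which is a connected cubic graph. -/
theorem inverse_breed1_spec {V : Type*} (G : SimpleGraph V)
    (hG : G.Connected) (hcub : IsCubic G) (v₁ v₂ a b c d : V)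
    (hbr : G.IsBridge s(v₁, v₂))
    (h1a : G.Adj v₁ a) (h1b : G.Adj v₁ b) (hab : a ≠ b) (hav : a ≠ v₂) (hbv : b ≠ v₂)
    (h2c : G.Adj v₂ c) (h2d : G.Adj v₂ d) (hcd : c ≠ d) (hcv : c ≠ v₁) (hdv : d ≠ v₁)
    (hnab : ¬ G.Adj a b) (hncd : ¬ G.Adj c d) :
    Nat.card (removeBridgePair G v₁ v₂ a b c d).ConnectedComponent = 2 ∧
      IsCubic (removeBridgePair G v₁ v₂ a b c d) := by
  have h12 : G.Adj v₁ v₂ := hbr.reachable_iff_adj.1 (hG.preconnected v₁ v₂)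
  have hN₁ : ∀ {w}, G.Adj v₁ w ↔ w = v₂ ∨ w = a ∨ w = b :=
    adj_iff_of_ncard_neighborSet_eq_three (hcub v₁) h12 h1a h1b hav.symm hbv.symm hab
  have hN₂ : ∀ {w}, G.Adj v₂ w ↔ w = v₁ ∨ w = c ∨ w = d :=
    adj_iff_of_ncard_neighborSet_eq_three (hcub v₂) h12.symm h2c h2d hcv.symm hdv.symm hcd
  have ha : a ≠ v₁ ∧ a ≠ v₂ := ⟨h1a.ne', hav⟩
  have hb : b ≠ v₁ ∧ b ≠ v₂ := ⟨h1b.ne', hbv⟩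
  have hc : c ≠ v₁ ∧ c ≠ v₂ := ⟨hcv, h2c.ne'⟩
  have hd : d ≠ v₁ ∧ d ≠ v₂ := ⟨hdv, h2d.ne'⟩
  exact ⟨card_connectedComponent_removeBridgePair hG.preconnected hbr hN₁ hN₂ hab hcd ha hb hc hd,
    isCubic_removeBridgePair hcub hN₁ hN₂ hab hcd (hbr.ne_of_adj h1a hav h2c hcv)
      (hbr.ne_of_adj h1a hav h2d hdv) (hbr.ne_of_adj h1b hbv h2c hcv)
      (hbr.ne_of_adj h1b hbv h2d hdv) ha hb hc hd hnab hncd⟩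
end

section
/- Let ΓD be a connected cubic graph containing a 2-cracker {(v1,v2), (v3,v4)}, where v1 and v3 lie in the same connected component S1 of ΓD minus the two cracker edges, and v2 and v4 lie in the other component S2. Suppose (v1,v3) is not an edge of ΓD and (v2,v4) is not an edge of ΓD. Then the graph obtained from S1 by adding the edge (v1,v3) is a connected cubic graph, and the graph obtained from S2 by adding the edge (v2,v4) is a connected cubic graph. -/
open SimpleGraph

/-- The connected component of r in G', viewed as a graph, with an extra edge (p,q)
added. -/
def sideGraph {V : Type*} (G' : SimpleGraph V) (r p q : V) :
    SimpleGraph {x : V // G'.Reachable r x} :=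
  SimpleGraph.fromRel (fun u w => G'.Adj u.1 w.1 ∨ (u.1 = p ∧ w.1 = q))

/-! Each side of the cracker is a connected component of `Γ` with the two cracker edges deleted,
so it stays connected after an edge is added. Inside that side only `v₁` (which loses `v₂`) and
`v₃` (which loses `v₄`) lose a neighbour, and the new edge `v₁v₃`, absent from `Γ`, gives each of
them exactly one back; so every degree is still 3. -/

namespace SimpleGraph

variable {V : Type*}

theorem sideGraph_adj {G' : SimpleGraph V} {r p q : V} {x y : {x // G'.Reachable r x}} :
    (sideGraph G' r p q).Adj x y ↔ (G' ⊔ edge p q).Adj x.1 y.1 := by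
  simp only [sideGraph, fromRel_adj, sup_adj, edge_adj, ne_eq, Subtype.ext_iff]
  have hcomm := G'.adj_comm x.1 y.1
  have hne : G'.Adj x.1 y.1 → x.1 ≠ y.1 := Adj.ne
  tauto

theorem sideGraph_reachable_of_walk {G' : SimpleGraph V} {r p q y x : V} (w : G'.Walk y x)
    (hy : G'.Reachable r y) :
    (sideGraph G' r p q).Reachable ⟨y, hy⟩ ⟨x, hy.trans w.reachable⟩ := by
  induction w with
  | nil => rfl
  | cons h w ih =>
    exact (Adj.reachable (sideGraph_adj.2 (.inl h))).trans (ih (hy.trans h.reachable))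

theorem sideGraph_connected (G' : SimpleGraph V) (r p q : V) :
    (sideGraph G' r p q).Connected := by
  have : Nonempty {x // G'.Reachable r x} := ⟨⟨r, .rfl⟩⟩
  have hroot : ∀ x, (sideGraph G' r p q).Reachable ⟨r, .rfl⟩ x :=
    fun ⟨_, ⟨w⟩⟩ => sideGraph_reachable_of_walk w .rfl
  exact ⟨fun x y => (hroot x).symm.trans (hroot y)⟩

theorem image_val_neighborSet_sideGraph {G' : SimpleGraph V} {r p q : V}
    (hp : G'.Reachable r p) (hq : G'.Reachable r q) (x : {x // G'.Reachable r x}) :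
    Subtype.val '' (sideGraph G' r p q).neighborSet x = (G' ⊔ edge p q).neighborSet x.1 := by
  ext w
  constructor
  · rintro ⟨y, hxy, rfl⟩
    exact sideGraph_adj.1 hxy
  · intro hxw
    have hw : G'.Reachable r w := by
      rw [mem_neighborSet, sup_adj, edge_adj] at hxw
      rcases hxw with h | ⟨⟨-, rfl⟩ | ⟨-, rfl⟩, -⟩
      exacts [x.2.trans h.reachable, hq, hp]
    exact ⟨⟨w, hw⟩, sideGraph_adj.2 hxw, rfl⟩

theorem ncard_neighborSet_sideGraph {G' : SimpleGraph V} {r p q : V}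
    (hp : G'.Reachable r p) (hq : G'.Reachable r q) (x : {x // G'.Reachable r x}) :
    ((sideGraph G' r p q).neighborSet x).ncard = ((G' ⊔ edge p q).neighborSet x.1).ncard := by
  rw [← image_val_neighborSet_sideGraph hp hq, Set.ncard_image_of_injective _ Subtype.val_injective]

theorem ncard_neighborSet_deleteEdges_sup_edge {G : SimpleGraph V} {a b c d x : V}
    (hab : G.Adj a b) (hcd : G.Adj c d) (hac : a ≠ c) (hnac : ¬ G.Adj a c)
    (hxb : x ≠ b) (hxd : x ≠ d) :
    ((G.deleteEdges {s(a, b), s(c, d)} ⊔ edge a c).neighborSet x).ncard =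
      (G.neighborSet x).ncard := by
  have hadj : ∀ w, (G.deleteEdges {s(a, b), s(c, d)} ⊔ edge a c).Adj x w ↔
      G.Adj x w ∧ ¬(x = a ∧ w = b) ∧ ¬(x = c ∧ w = d) ∨ (x = a ∧ w = c ∨ x = c ∧ w = a) := by
    intro w
    simp only [sup_adj, deleteEdges_adj, edge_adj, Set.mem_insert_iff, Set.mem_singleton_iff,
      Sym2.eq_iff]
    grind
  rcases eq_or_ne x a with rfl | hxa
  · have : (G.deleteEdges {s(x, b), s(c, d)} ⊔ edge x c).neighborSet x =
        insert c (G.neighborSet x \ {b}) := by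
      ext w
      simp only [mem_neighborSet, hadj, Set.mem_insert_iff, Set.mem_sdiff, Set.mem_singleton_iff]
      grind
    rw [this]
    exact Set.ncard_exchange hnac hab
  rcases eq_or_ne x c with rfl | hxc
  · have : (G.deleteEdges {s(a, b), s(x, d)} ⊔ edge a x).neighborSet x =
        insert a (G.neighborSet x \ {d}) := by
      ext w
      simp only [mem_neighborSet, hadj, Set.mem_insert_iff, Set.mem_sdiff, Set.mem_singleton_iff]
      grind
    rw [this]
    exact Set.ncard_exchange (fun h => hnac h.symm) hcd
  · congr 1
    ext w
    simp only [mem_neighborSet, hadj]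
    grind

theorem isCubic_sideGraph {G : SimpleGraph V} (hcub : IsCubic G) {a b c d : V}
    (hab : G.Adj a b) (hcd : G.Adj c d) (hac : a ≠ c) (hnac : ¬ G.Adj a c)
    (hc : (G.deleteEdges {s(a, b), s(c, d)}).Reachable a c)
    (hb : ¬ (G.deleteEdges {s(a, b), s(c, d)}).Reachable a b)
    (hd : ¬ (G.deleteEdges {s(a, b), s(c, d)}).Reachable a d) :
    IsCubic (sideGraph (G.deleteEdges {s(a, b), s(c, d)}) a a c) := fun x => by
  have hne : ∀ y, ¬ (G.deleteEdges {s(a, b), s(c, d)}).Reachable a y → x.1 ≠ y :=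
    fun y hy h => hy (h ▸ x.2)
  rw [ncard_neighborSet_sideGraph .rfl hc, ncard_neighborSet_deleteEdges_sup_edge hab hcd hac hnac
    (hne b hb) (hne d hd), hcub]

theorem IsKCracker.adj_adj_ne_ne {G : SimpleGraph V} {v₁ v₂ v₃ v₄ : V}
    (h : IsKCracker G {s(v₁, v₂), s(v₃, v₄)} 2) :
    G.Adj v₁ v₂ ∧ G.Adj v₃ v₄ ∧ v₁ ≠ v₃ ∧ v₂ ≠ v₄ := by
  obtain ⟨⟨-, hsub, hdisj, -, -⟩, hcard⟩ := h
  have hne : s(v₁, v₂) ≠ s(v₃, v₄) := fun heq => by simp [heq] at hcard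
  have hsep := hdisj (by simp) (by simp) hne
  exact ⟨hsub (Set.mem_insert _ _), hsub (Set.mem_insert_of_mem _ rfl),
    fun h => hsep v₁ ⟨by simp, by simp [h]⟩, fun h => hsep v₂ ⟨by simp, by simp [h]⟩⟩

end SimpleGraph

theorem inverse_breed2_spec_general {V : Type*} (G : SimpleGraph V)
    (hcub : IsCubic G) (v₁ v₂ v₃ v₄ : V)
    (hcr : IsKCracker G {s(v₁, v₂), s(v₃, v₄)} 2)
    (h13 : (G.deleteEdges {s(v₁, v₂), s(v₃, v₄)}).Reachable v₁ v₃)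
    (h24 : (G.deleteEdges {s(v₁, v₂), s(v₃, v₄)}).Reachable v₂ v₄)
    (h12 : ¬ (G.deleteEdges {s(v₁, v₂), s(v₃, v₄)}).Reachable v₁ v₂)
    (hn13 : ¬ G.Adj v₁ v₃) (hn24 : ¬ G.Adj v₂ v₄) :
    (sideGraph (G.deleteEdges {s(v₁, v₂), s(v₃, v₄)}) v₁ v₁ v₃).Connected ∧
      IsCubic (sideGraph (G.deleteEdges {s(v₁, v₂), s(v₃, v₄)}) v₁ v₁ v₃) ∧
      (sideGraph (G.deleteEdges {s(v₁, v₂), s(v₃, v₄)}) v₂ v₂ v₄).Connected ∧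
      IsCubic (sideGraph (G.deleteEdges {s(v₁, v₂), s(v₃, v₄)}) v₂ v₂ v₄) := by
  obtain ⟨h₁₂, h₃₄, hne₁₃, hne₂₄⟩ := hcr.adj_adj_ne_ne
  have hswap : ({s(v₂, v₁), s(v₄, v₃)} : Set (Sym2 V)) = {s(v₁, v₂), s(v₃, v₄)} := by
    rw [Sym2.eq_swap, Sym2.eq_swap (a := v₄)]
  have hcub₂ := isCubic_sideGraph hcub h₁₂.symm h₃₄.symm hne₂₄ hn24 (hswap ▸ h24)
    (hswap ▸ fun h => h12 h.symm) (hswap ▸ fun h => h12 (h13.trans h.symm))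
  rw [hswap] at hcub₂
  exact ⟨sideGraph_connected _ _ _ _,
    isCubic_sideGraph hcub h₁₂ h₃₄ hne₁₃ hn13 h13 h12 (fun h => h12 (h.trans h24.symm)),
    sideGraph_connected _ _ _ _, hcub₂⟩

/-- the inverse of a type 2 breeding operation. If {(v₁,v₂),(v₃,v₄)} is a
2-cracker of a connected cubic graph, with v₁,v₃ on one side and v₂,v₄ on the other,
and neither (v₁,v₃) nor (v₂,v₄) is an edge, then each side together with the
corresponding added edge is a connected cubic graph. -/
theorem inverse_breed2_spec {V : Type*} (G : SimpleGraph V)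
    (hG : G.Connected) (hcub : IsCubic G) (v₁ v₂ v₃ v₄ : V)
    (hcr : IsKCracker G {s(v₁, v₂), s(v₃, v₄)} 2)
    (h13 : (G.deleteEdges {s(v₁, v₂), s(v₃, v₄)}).Reachable v₁ v₃)
    (h24 : (G.deleteEdges {s(v₁, v₂), s(v₃, v₄)}).Reachable v₂ v₄)
    (h12 : ¬ (G.deleteEdges {s(v₁, v₂), s(v₃, v₄)}).Reachable v₁ v₂)
    (hn13 : ¬ G.Adj v₁ v₃) (hn24 : ¬ G.Adj v₂ v₄) :
    (sideGraph (G.deleteEdges {s(v₁, v₂), s(v₃, v₄)}) v₁ v₁ v₃).Connected ∧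
      IsCubic (sideGraph (G.deleteEdges {s(v₁, v₂), s(v₃, v₄)}) v₁ v₁ v₃) ∧
      (sideGraph (G.deleteEdges {s(v₁, v₂), s(v₃, v₄)}) v₂ v₂ v₄).Connected ∧
      IsCubic (sideGraph (G.deleteEdges {s(v₁, v₂), s(v₃, v₄)}) v₂ v₂ v₄) :=
  inverse_breed2_spec_general G hcub v₁ v₂ v₃ v₄ hcr h13 h24 h12 hn13 hn24
end

section
/- Let ΓD be a connected cubic graph containing a 3-cracker {(v1,v2), (v3,v4), (v5,v6)}, where v1, v3, v5 lie in one connected component S1 of ΓD minus the three cracker edges, and v2, v4, v6 lie in the other component S2. Then the graph obtained from S1 by adding a new vertex adjacent to exactly v1, v3 and v5 is a connected cubic graph, and the graph obtained from S2 by adding a new vertex adjacent to exactly v2, v4 and v6 is a connected cubic graph. -/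
/-!
Deleting the pairwise disjoint cracker edges lowers the degree of each of their six endpoints
from 3 to 2 and leaves all other degrees at 3. The component of `v₁` contains `v₁, v₃, v₅` and,
as `v₂` is not reachable from `v₁`, none of `v₂, v₄, v₆`; so its degree-2 vertices are exactly
`v₁, v₃, v₅`, which the new vertex raises back to 3. These three are distinct because the three
cracker edges are distinct and disjoint, so the new vertex has degree 3 as well. The other side
is the same statement with the endpoints of every cracker edge swapped.
-/

open SimpleGraph

/-- The connected component of r in G', viewed as a graph, with a new vertex added
that is adjacent to exactly p, q and w. -/
def sideGraphPlusVertex {V : Type*} (G' : SimpleGraph V) (r p q w : V) :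
    SimpleGraph ({x : V // G'.Reachable r x} ⊕ Unit) :=
  SimpleGraph.fromRel (fun u u' =>
    (∃ x y : {x : V // G'.Reachable r x}, u = Sum.inl x ∧ u' = Sum.inl y ∧ G'.Adj x.1 y.1) ∨
    (∃ x : {x : V // G'.Reachable r x}, u = Sum.inl x ∧ u' = Sum.inr () ∧
      (x.1 = p ∨ x.1 = q ∨ x.1 = w)))

theorem isCubic_iff_encard {V : Type*} (G : SimpleGraph V) :
    IsCubic G ↔ ∀ v, (G.neighborSet v).encard = 3 := by
  simp only [IsCubic, Set.ncard_def, ENat.toNat_eq_iff_eq_natCast, Nat.cast_ofNat]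

theorem ne_of_ncard_eq_three {α : Type*} {a b c : α} (h : ({a, b, c} : Set α).ncard = 3) :
    a ≠ b ∧ a ≠ c ∧ b ≠ c := by
  have pair_le (x y : α) : ({x, y} : Set α).ncard ≤ 2 := by
    simpa using Set.ncard_insert_le x {y}
  refine ⟨?_, ?_, ?_⟩ <;> rintro rfl <;> simp [Set.pair_comm] at h <;>
    exact absurd (h.symm.trans_le (pair_le _ _)) (by norm_num)

namespace SimpleGraph

variable {V : Type*} {G : SimpleGraph V} {C : Set (Sym2 V)}

theorem neighborSet_deleteEdges_of_mem
    (hC : C.Pairwise (fun e f => ∀ v : V, ¬(v ∈ e ∧ v ∈ f))) {a b : V} (hab : s(a, b) ∈ C) :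
    (G.deleteEdges C).neighborSet a = G.neighborSet a \ {b} := by
  ext y
  simp only [mem_neighborSet, deleteEdges_adj, Set.mem_sdiff, Set.mem_singleton_iff]
  refine and_congr_right fun _ => not_congr ⟨fun hay => ?_, fun hyb => hyb ▸ hab⟩
  by_contra hyb
  exact hC hab hay (fun h => hyb (Sym2.congr_right.mp h).symm) a
    ⟨Sym2.mem_mk_left a b, Sym2.mem_mk_left a y⟩

theorem neighborSet_deleteEdges_of_forall_notMem {a : V} (ha : ∀ b, s(a, b) ∉ C) :
    (G.deleteEdges C).neighborSet a = G.neighborSet a := by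
  ext y
  simpa using fun _ => ha y

theorem encard_neighborSet_deleteEdges_add_one (hCG : C ⊆ G.edgeSet)
    (hC : C.Pairwise (fun e f => ∀ v : V, ¬(v ∈ e ∧ v ∈ f))) {a b : V} (hab : s(a, b) ∈ C) :
    ((G.deleteEdges C).neighborSet a).encard + 1 = (G.neighborSet a).encard := by
  rw [neighborSet_deleteEdges_of_mem hC hab]
  exact Set.encard_sdiff_singleton_add_one (hCG hab)

end SimpleGraph

namespace sideGraphPlusVertex

variable {V : Type*} (G' : SimpleGraph V) (r p q w : V)

theorem adj_inl_inl (x y : {x : V // G'.Reachable r x}) :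
    (sideGraphPlusVertex G' r p q w).Adj (.inl x) (.inl y) ↔ G'.Adj x.1 y.1 := by
  simpa [sideGraphPlusVertex, adj_comm G' y.1, Subtype.ext_iff, x.2, y.2] using
    fun h : G'.Adj x.1 y.1 => h.ne

theorem adj_inl_inr (x : {x : V // G'.Reachable r x}) (u : Unit) :
    (sideGraphPlusVertex G' r p q w).Adj (.inl x) (.inr u) ↔ x.1 = p ∨ x.1 = q ∨ x.1 = w := by
  simp [sideGraphPlusVertex]

theorem reachable_inl_of_walk {a b : V} (W : G'.Walk a b) (ha : G'.Reachable r a) :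
    (sideGraphPlusVertex G' r p q w).Reachable (.inl ⟨a, ha⟩) (.inl ⟨b, ha.trans ⟨W⟩⟩) := by
  induction W with
  | nil => rfl
  | cons hadj W ih =>
    exact ((adj_inl_inl G' r p q w _ ⟨_, ha.trans hadj.reachable⟩).2 hadj).reachable.trans (ih _)

theorem connected : (sideGraphPlusVertex G' r r q w).Connected := by
  refine (connected_iff_exists_forall_reachable _).2 ⟨.inl ⟨r, .rfl⟩, ?_⟩
  rintro (⟨x, ⟨W⟩⟩ | u)
  · exact reachable_inl_of_walk G' r r q w W .rfl
  · exact ((adj_inl_inr G' r r q w _ u).2 (.inl rfl)).reachable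

theorem neighborSet_inr (hp : G'.Reachable r p) (hq : G'.Reachable r q)
    (hw : G'.Reachable r w) (u : Unit) :
    (sideGraphPlusVertex G' r p q w).neighborSet (.inr u) =
      {.inl ⟨p, hp⟩, .inl ⟨q, hq⟩, .inl ⟨w, hw⟩} := by
  ext (y | v)
  · simp [adj_comm, adj_inl_inr, Subtype.ext_iff]
  · simp

theorem encard_neighborSet_inr (hp : G'.Reachable r p) (hq : G'.Reachable r q)
    (hw : G'.Reachable r w) (hpq : p ≠ q) (hpw : p ≠ w) (hqw : q ≠ w) (u : Unit) :
    ((sideGraphPlusVertex G' r p q w).neighborSet (.inr u)).encard = 3 := by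
  rw [neighborSet_inr G' r p q w hp hq hw, Set.encard_eq_three]
  exact ⟨_, _, _, by simpa, by simpa, by simpa, rfl⟩

open Classical in
theorem encard_neighborSet_inl (x : {x : V // G'.Reachable r x}) :
    ((sideGraphPlusVertex G' r p q w).neighborSet (.inl x)).encard =
      (G'.neighborSet x.1).encard + if x.1 = p ∨ x.1 = q ∨ x.1 = w then 1 else 0 := by
  have hG' : (Sum.inl '' {y | G'.Adj x.1 y.1} :
      Set ({x : V // G'.Reachable r x} ⊕ Unit)).encard = (G'.neighborSet x.1).encard := by
    rw [Sum.inl_injective.encard_image, ← Subtype.val_injective.encard_image]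
    congr
    ext y
    simpa using fun hxy => x.2.trans hxy.reachable
  split_ifs with hx
  · rw [← hG', ← Set.encard_insert_of_notMem (a := .inr ()) (by simp)]
    congr
    ext (y | u) <;> simp [adj_inl_inl, adj_inl_inr, hx]
  · rw [← hG', add_zero]
    congr
    ext (y | u) <;> simp [adj_inl_inl, adj_inl_inr, hx]

open Classical in
theorem isCubic (hp : G'.Reachable r p) (hq : G'.Reachable r q) (hw : G'.Reachable r w)
    (hpq : p ≠ q) (hpw : p ≠ w) (hqw : q ≠ w)
    (hdeg : ∀ x, G'.Reachable r x →
      (G'.neighborSet x).encard + (if x = p ∨ x = q ∨ x = w then 1 else 0) = 3) :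
    IsCubic (sideGraphPlusVertex G' r p q w) := by
  rw [isCubic_iff_encard]
  rintro (x | u)
  · rw [encard_neighborSet_inl]
    exact hdeg x.1 x.2
  · exact encard_neighborSet_inr G' r p q w hp hq hw hpq hpw hqw u

end sideGraphPlusVertex

theorem isCubic_sideGraphPlusVertex_deleteEdges {V : Type*} {G : SimpleGraph V}
    {C : Set (Sym2 V)} (hcub : IsCubic G) (hCG : C ⊆ G.edgeSet)
    (hC : C.Pairwise (fun e f => ∀ v : V, ¬(v ∈ e ∧ v ∈ f))) {p q w : V}
    (hpq : p ≠ q) (hpw : p ≠ w) (hqw : q ≠ w)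
    (hq : (G.deleteEdges C).Reachable p q) (hw : (G.deleteEdges C).Reachable p w)
    (hends : ∀ x, (G.deleteEdges C).Reachable p x →
      ((∃ y, s(x, y) ∈ C) ↔ x = p ∨ x = q ∨ x = w)) :
    IsCubic (sideGraphPlusVertex (G.deleteEdges C) p p q w) := by
  refine sideGraphPlusVertex.isCubic _ p p q w .rfl hq hw hpq hpw hqw fun x hx => ?_
  rw [← (isCubic_iff_encard G).1 hcub x]
  split_ifs with hpqw
  · obtain ⟨y, hxy⟩ := (hends x hx).2 hpqw
    exact encard_neighborSet_deleteEdges_add_one hCG hC hxy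
  · rw [add_zero, neighborSet_deleteEdges_of_forall_notMem]
    exact fun y hxy => hpqw ((hends x hx).1 ⟨y, hxy⟩)

theorem isCubic_sideGraphPlusVertex_of_isKCracker {V : Type*} {G : SimpleGraph V}
    (hcub : IsCubic G) {v₁ v₂ v₃ v₄ v₅ v₆ : V}
    (hcr : IsKCracker G {s(v₁, v₂), s(v₃, v₄), s(v₅, v₆)} 3)
    (h13 : (G.deleteEdges {s(v₁, v₂), s(v₃, v₄), s(v₅, v₆)}).Reachable v₁ v₃)
    (h15 : (G.deleteEdges {s(v₁, v₂), s(v₃, v₄), s(v₅, v₆)}).Reachable v₁ v₅)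
    (h24 : (G.deleteEdges {s(v₁, v₂), s(v₃, v₄), s(v₅, v₆)}).Reachable v₂ v₄)
    (h26 : (G.deleteEdges {s(v₁, v₂), s(v₃, v₄), s(v₅, v₆)}).Reachable v₂ v₆)
    (h12 : ¬ (G.deleteEdges {s(v₁, v₂), s(v₃, v₄), s(v₅, v₆)}).Reachable v₁ v₂) :
    IsCubic (sideGraphPlusVertex (G.deleteEdges {s(v₁, v₂), s(v₃, v₄), s(v₅, v₆)})
      v₁ v₁ v₃ v₅) := by
  obtain ⟨⟨-, hCG, hC, -⟩, hcard⟩ := hcr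
  obtain ⟨he₁₃, he₁₅, he₃₅⟩ := ne_of_ncard_eq_three hcard
  refine isCubic_sideGraphPlusVertex_deleteEdges hcub hCG hC
    (fun h => hC (by simp) (by simp) he₁₃ v₁ ⟨by simp, by simp [h]⟩)
    (fun h => hC (by simp) (by simp) he₁₅ v₁ ⟨by simp, by simp [h]⟩)
    (fun h => hC (by simp) (by simp) he₃₅ v₃ ⟨by simp, by simp [h]⟩) h13 h15 fun x hx => ?_
  constructor
  · rintro ⟨y, hxy⟩
    simp only [Set.mem_insert_iff, Set.mem_singleton_iff, Sym2.eq_iff] at hxy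
    rcases hxy with (⟨h, -⟩ | ⟨h, -⟩) | (⟨h, -⟩ | ⟨h, -⟩) | ⟨h, -⟩ | ⟨h, -⟩
    · exact .inl h
    · exact absurd (h ▸ hx) h12
    · exact .inr (.inl h)
    · exact absurd ((h ▸ hx).trans h24.symm) h12
    · exact .inr (.inr h)
    · exact absurd ((h ▸ hx).trans h26.symm) h12
  · rintro (rfl | rfl | rfl)
    exacts [⟨v₂, by simp⟩, ⟨v₄, by simp⟩, ⟨v₆, by simp⟩]

theorem inverse_breed3_spec_general {V : Type*} (G : SimpleGraph V)
    (hcub : IsCubic G) (v₁ v₂ v₃ v₄ v₅ v₆ : V)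
    (hcr : IsKCracker G {s(v₁, v₂), s(v₃, v₄), s(v₅, v₆)} 3)
    (h13 : (G.deleteEdges {s(v₁, v₂), s(v₃, v₄), s(v₅, v₆)}).Reachable v₁ v₃)
    (h15 : (G.deleteEdges {s(v₁, v₂), s(v₃, v₄), s(v₅, v₆)}).Reachable v₁ v₅)
    (h24 : (G.deleteEdges {s(v₁, v₂), s(v₃, v₄), s(v₅, v₆)}).Reachable v₂ v₄)
    (h26 : (G.deleteEdges {s(v₁, v₂), s(v₃, v₄), s(v₅, v₆)}).Reachable v₂ v₆)
    (h12 : ¬ (G.deleteEdges {s(v₁, v₂), s(v₃, v₄), s(v₅, v₆)}).Reachable v₁ v₂) :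
    (sideGraphPlusVertex (G.deleteEdges {s(v₁, v₂), s(v₃, v₄), s(v₅, v₆)}) v₁ v₁ v₃ v₅).Connected ∧
      IsCubic (sideGraphPlusVertex (G.deleteEdges {s(v₁, v₂), s(v₃, v₄), s(v₅, v₆)}) v₁ v₁ v₃ v₅) ∧
      (sideGraphPlusVertex (G.deleteEdges {s(v₁, v₂), s(v₃, v₄), s(v₅, v₆)}) v₂ v₂ v₄ v₆).Connected ∧
      IsCubic (sideGraphPlusVertex (G.deleteEdges {s(v₁, v₂), s(v₃, v₄), s(v₅, v₆)}) v₂ v₂ v₄ v₆) := by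
  refine ⟨sideGraphPlusVertex.connected _ _ _ _,
    isCubic_sideGraphPlusVertex_of_isKCracker hcub hcr h13 h15 h24 h26 h12,
    sideGraphPlusVertex.connected _ _ _ _, ?_⟩
  have hswap : ({s(v₂, v₁), s(v₄, v₃), s(v₆, v₅)} : Set (Sym2 V)) =
      {s(v₁, v₂), s(v₃, v₄), s(v₅, v₆)} := by
    rw [Sym2.eq_swap (a := v₂), Sym2.eq_swap (a := v₄), Sym2.eq_swap (a := v₆)]
  rw [← hswap] at hcr h13 h15 h24 h26 h12 ⊢
  exact isCubic_sideGraphPlusVertex_of_isKCracker hcub hcr h24 h26 h13 h15 (h12 ·.symm)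

/-- the inverse of a type 3 breeding operation. If
{(v₁,v₂),(v₃,v₄),(v₅,v₆)} is a 3-cracker of a connected cubic graph, with v₁,v₃,v₅ on
one side and v₂,v₄,v₆ on the other, then each side together with a new vertex joined
to its three cracker endpoints is a connected cubic graph. -/
theorem inverse_breed3_spec {V : Type*} (G : SimpleGraph V)
    (hG : G.Connected) (hcub : IsCubic G) (v₁ v₂ v₃ v₄ v₅ v₆ : V)
    (hcr : IsKCracker G {s(v₁, v₂), s(v₃, v₄), s(v₅, v₆)} 3)
    (h13 : (G.deleteEdges {s(v₁, v₂), s(v₃, v₄), s(v₅, v₆)}).Reachable v₁ v₃)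
    (h15 : (G.deleteEdges {s(v₁, v₂), s(v₃, v₄), s(v₅, v₆)}).Reachable v₁ v₅)
    (h24 : (G.deleteEdges {s(v₁, v₂), s(v₃, v₄), s(v₅, v₆)}).Reachable v₂ v₄)
    (h26 : (G.deleteEdges {s(v₁, v₂), s(v₃, v₄), s(v₅, v₆)}).Reachable v₂ v₆)
    (h12 : ¬ (G.deleteEdges {s(v₁, v₂), s(v₃, v₄), s(v₅, v₆)}).Reachable v₁ v₂) :
    (sideGraphPlusVertex (G.deleteEdges {s(v₁, v₂), s(v₃, v₄), s(v₅, v₆)}) v₁ v₁ v₃ v₅).Connected ∧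
      IsCubic (sideGraphPlusVertex (G.deleteEdges {s(v₁, v₂), s(v₃, v₄), s(v₅, v₆)}) v₁ v₁ v₃ v₅) ∧
      (sideGraphPlusVertex (G.deleteEdges {s(v₁, v₂), s(v₃, v₄), s(v₅, v₆)}) v₂ v₂ v₄ v₆).Connected ∧
      IsCubic (sideGraphPlusVertex (G.deleteEdges {s(v₁, v₂), s(v₃, v₄), s(v₅, v₆)}) v₂ v₂ v₄ v₆) :=
  inverse_breed3_spec_general G hcub v₁ v₂ v₃ v₄ v₅ v₆ hcr h13 h15 h24 h26 h12
end
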